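/- arXiv:2207.07984 — 4 statements merged into one kernel-verified Lean document; each statement's English description precedes it below -/
import Mathlib

section
/- An RSCF φ : 𝒟^n → Δ(A) is unanimous, strategy-proof and group-wise anonymous if and only if it is a probabilistic fixed group ballot rule. -/
open Finset

/-! ### Preferences and the single-peaked domain -/

/-- A strict preference over the `m+1` alternatives `Fin (m+1)`:
`P k` is the alternative ranked `k`-th (`0`-indexed, so `P 0` is the top). -/
abbrev Pref (m : ℕ) := Equiv.Perm (Fin (m + 1))

/-- Single-peakedness w.r.t. the prior linear order on `Fin (m+1)`. -/
def SinglePeaked {m : ℕ} (P : Pref m) : Prop :=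
  ∀ a b : Fin (m + 1), ((P 0 ≤ a ∧ a < b) ∨ (b < a ∧ a ≤ P 0)) → P.symm a < P.symm b

/-- The single-peaked domain `𝒟`. -/
abbrev SPPref (m : ℕ) := {P : Pref m // SinglePeaked P}

/-- Top-ranked alternative of a preference. -/
def peak {m : ℕ} (P : SPPref m) : Fin (m + 1) := P.val 0

/-- The upper contour set `U(a, P)` of the alternative `a` at `P`. -/
def UC {m : ℕ} (P : SPPref m) (a : Fin (m + 1)) : Finset (Fin (m + 1)) :=
  univ.filter fun b => P.val.symm b ≤ P.val.symm a

/-- The set of the `k` top-ranked alternatives of `P`, i.e. `U(P(k), P)`. -/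
def topSet {m : ℕ} (P : SPPref m) (k : ℕ) : Finset (Fin (m + 1)) :=
  univ.filter fun b => (P.val.symm b : ℕ) < k

/-- A profile of single-peaked preferences, one for each of the `n` agents. -/
abbrev Profile (m n : ℕ) := Fin n → SPPref m

/-- A random social choice function, recorded via its probabilities. -/
abbrev RSCF (m n : ℕ) := Profile m n → Fin (m + 1) → ℝ

def IsProb {m : ℕ} (p : Fin (m + 1) → ℝ) : Prop :=
  (∀ a, 0 ≤ p a) ∧ ∑ a, p a = 1

/-- `φ` genuinely maps into `Δ(A)`. -/
def IsRSCF {m n : ℕ} (φ : RSCF m n) : Prop := ∀ P, IsProb (φ P)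

/-- `φ_B(P)`, the probability of the set `B` at profile `P`. -/
def probOn {m n : ℕ} (φ : RSCF m n) (P : Profile m n) (B : Finset (Fin (m + 1))) : ℝ :=
  ∑ b ∈ B, φ P b

def Unanimous {m n : ℕ} (φ : RSCF m n) : Prop :=
  ∀ (P : Profile m n) (a : Fin (m + 1)), (∀ i, peak (P i) = a) → φ P a = 1

def StrategyProof {m n : ℕ} (φ : RSCF m n) : Prop :=
  ∀ (i : Fin n) (P : Profile m n) (P' : SPPref m) (a : Fin (m + 1)),
    probOn φ (Function.update P i P') (UC (P i) a) ≤ probOn φ P (UC (P i) a)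

def Anonymous {m n : ℕ} (φ : RSCF m n) : Prop :=
  ∀ (σ : Equiv.Perm (Fin n)) (P : Profile m n), φ P = φ fun i => P (σ i)

/-! ### Deterministic social choice functions -/

def DUnanimous {m n : ℕ} (f : Profile m n → Fin (m + 1)) : Prop :=
  ∀ (P : Profile m n) (a : Fin (m + 1)), (∀ i, peak (P i) = a) → f P = a

def DStrategyProof {m n : ℕ} (f : Profile m n → Fin (m + 1)) : Prop :=
  ∀ (i : Fin n) (P : Profile m n) (P' : SPPref m) (a : Fin (m + 1)),
    f (Function.update P i P') ∈ UC (P i) a → f P ∈ UC (P i) a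

/-! ### Probabilistic fixed ballot rules -/

def IsPFBRWith {m n : ℕ} (β : Finset (Fin n) → Fin (m + 1) → ℝ) (φ : RSCF m n) : Prop :=
  (∀ S, IsProb (β S)) ∧
  β ∅ (Fin.last m) = 1 ∧
  β univ 0 = 1 ∧
  (∀ S T : Finset (Fin n), S ⊆ T → ∀ t : Fin (m + 1),
    ∑ b ∈ Iic t, β S b ≤ ∑ b ∈ Iic t, β T b) ∧
  ∀ (P : Profile m n) (t : Fin (m + 1)),
    φ P t = (∑ b ∈ Iic t, β (univ.filter fun i => peak (P i) ≤ t) b)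
          - ∑ b ∈ Iio t, β (univ.filter fun i => peak (P i) < t) b

def IsPFBR {m n : ℕ} (φ : RSCF m n) : Prop := ∃ β, IsPFBRWith β φ

/-! ### Min-max rules -/

def minmaxOutcome {m n : ℕ} (β : Finset (Fin n) → Fin (m + 1)) (P : Profile m n) :
    Fin (m + 1) :=
  (univ : Finset (Finset (Fin n))).inf' univ_nonempty fun S =>
    (insert (β S) (S.image fun i => peak (P i))).max' (insert_nonempty _ _)

def MinMaxParams {m n : ℕ} (β : Finset (Fin n) → Fin (m + 1)) : Prop :=
  β ∅ = Fin.last m ∧ β univ = 0 ∧ ∀ S T : Finset (Fin n), S ⊆ T → β T ≤ β S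

def IsMinMax {m n : ℕ} (f : Profile m n → Fin (m + 1)) : Prop :=
  ∃ β, MinMaxParams β ∧ ∀ P, f P = minmaxOutcome β P

/-- `φ` is the mixture of the deterministic rules `F w` with weights `lam w`. -/
def IsMixture {m n : ℕ} (φ : RSCF m n) (k : ℕ) (lam : Fin k → ℝ)
    (F : Fin k → Profile m n → Fin (m + 1)) : Prop :=
  (∀ w, 0 ≤ lam w) ∧ (∑ w, lam w = 1) ∧
  ∀ P a, φ P a = ∑ w, lam w * (if F w P = a then (1 : ℝ) else 0)

/-! ### Groups -/

/-- Size of the group `q` of the partition described by `grp`. -/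
def gsize {n g : ℕ} (grp : Fin n → Fin g) (q : Fin g) : ℕ :=
  (univ.filter fun i => grp i = q).card

lemma count_le_n {n : ℕ} (p : Fin n → Prop) [DecidablePred p] :
    (univ.filter p).card ≤ n := by
  simpa using card_filter_le (univ : Finset (Fin n)) p

/-- Membership in `Γ`: each component is at most the size of the corresponding group. -/
def GammaValid {n g : ℕ} (grp : Fin n → Fin g) (γ : Fin g → Fin (n + 1)) : Prop :=
  ∀ q, (γ q : ℕ) ≤ gsize grp q

/-- The maximal element `γ̄` of `Γ`. -/
def gammaTop {n g : ℕ} (grp : Fin n → Fin g) : Fin g → Fin (n + 1) :=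
  fun q => ⟨gsize grp q, Nat.lt_succ_of_le (count_le_n _)⟩

/-- `α(t; P)`: componentwise, the number of agents of each group whose peak is `≤ t`. -/
def alphaVec {m n g : ℕ} (grp : Fin n → Fin g) (P : Profile m n) (t : Fin (m + 1)) :
    Fin g → Fin (n + 1) := fun q =>
  ⟨(univ.filter fun i => grp i = q ∧ peak (P i) ≤ t).card, Nat.lt_succ_of_le (count_le_n _)⟩

/-- `α(t-1; P)` in zero-indexed form: agents of each group whose peak is `< t`. -/
def alphaLtVec {m n g : ℕ} (grp : Fin n → Fin g) (P : Profile m n) (t : Fin (m + 1)) :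
    Fin g → Fin (n + 1) := fun q =>
  ⟨(univ.filter fun i => grp i = q ∧ peak (P i) < t).card, Nat.lt_succ_of_le (count_le_n _)⟩

def GroupAnon {m n g : ℕ} (grp : Fin n → Fin g) (φ : RSCF m n) : Prop :=
  ∀ π : Equiv.Perm (Fin n), (∀ i, grp (π i) = grp i) →
    ∀ P : Profile m n, φ P = φ fun i => P (π i)

def DGroupAnon {m n g : ℕ} (grp : Fin n → Fin g) (f : Profile m n → Fin (m + 1)) : Prop :=
  ∀ π : Equiv.Perm (Fin n), (∀ i, grp (π i) = grp i) →
    ∀ P : Profile m n, f P = f fun i => P (π i)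

/-! ### Probabilistic fixed group ballot rules -/

def IsPFGBRWith {m n g : ℕ} (grp : Fin n → Fin g)
    (β : (Fin g → Fin (n + 1)) → Fin (m + 1) → ℝ) (φ : RSCF m n) : Prop :=
  (∀ γ, GammaValid grp γ → IsProb (β γ)) ∧
  β (fun _ => 0) (Fin.last m) = 1 ∧
  β (gammaTop grp) 0 = 1 ∧
  (∀ γ γ', GammaValid grp γ → GammaValid grp γ' → (∀ q, γ' q ≤ γ q) →
    ∀ t : Fin (m + 1), ∑ b ∈ Iic t, β γ' b ≤ ∑ b ∈ Iic t, β γ b) ∧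
  ∀ (P : Profile m n) (t : Fin (m + 1)),
    φ P t = (∑ b ∈ Iic t, β (alphaVec grp P t) b) - ∑ b ∈ Iio t, β (alphaLtVec grp P t) b

def IsPFGBR {m n g : ℕ} (grp : Fin n → Fin g) (φ : RSCF m n) : Prop :=
  ∃ β, IsPFGBRWith grp β φ

/-! ### Group min-max rules -/

/-- `τ_t(P_{N_q})` : the `t`-th smallest peak of group `q` (`τ_0 = a_1`). -/
def tau {m n g : ℕ} (grp : Fin n → Fin g) (P : Profile m n) (q : Fin g) (t : ℕ) :
    Fin (m + 1) :=
  ((0 : Fin (m + 1)) ::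
    Multiset.sort
      ((univ.filter fun i => grp i = q).val.map fun i => peak (P i)) (· ≤ ·)).getD t 0

/-- `Γ` as a finite set. -/
def gammaSet {n g : ℕ} (grp : Fin n → Fin g) : Finset (Fin g → Fin (n + 1)) :=
  univ.filter fun γ => ∀ q, (γ q : ℕ) ≤ gsize grp q

lemma gammaSet_nonempty {n g : ℕ} (grp : Fin n → Fin g) : (gammaSet grp).Nonempty :=
  ⟨fun _ => 0, by simp [gammaSet]⟩

/-- Outcome of the group min-max rule with parameters `β`. -/
def gmmrOutcome {m n g : ℕ} (grp : Fin n → Fin g)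
    (β : (Fin g → Fin (n + 1)) → Fin (m + 1)) (P : Profile m n) : Fin (m + 1) :=
  (gammaSet grp).inf' (gammaSet_nonempty grp) fun γ =>
    (insert (β γ) (univ.image fun q => tau grp P q ((γ q : ℕ)))).max' (insert_nonempty _ _)

def GMMRParams {m n g : ℕ} (grp : Fin n → Fin g)
    (β : (Fin g → Fin (n + 1)) → Fin (m + 1)) : Prop :=
  β (fun _ => 0) = Fin.last m ∧ β (gammaTop grp) = 0 ∧
  ∀ γ γ', GammaValid grp γ → GammaValid grp γ' → (∀ q, γ' q ≤ γ q) → β γ ≤ β γ'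

def IsGMMR {m n g : ℕ} (grp : Fin n → Fin g) (f : Profile m n → Fin (m + 1)) : Prop :=
  ∃ β, GMMRParams grp β ∧ ∀ P, f P = gmmrOutcome grp β P

/-! ### Representation scenarios and group fairness -/

/-- A preference profile of the members of group `q`. -/
abbrev GrpProfile (m : ℕ) {n g : ℕ} (grp : Fin n → Fin g) (q : Fin g) :=
  {i : Fin n // grp i = q} → SPPref m

/-- Restriction of a profile to the members of group `q`. -/
def restrict {m n g : ℕ} (grp : Fin n → Fin g) (P : Profile m n) (q : Fin g) :
    GrpProfile m grp q := fun i => P i.val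

/-- A representation scenario: a representative function for each group. -/
abbrev RepScenario (m : ℕ) {n g : ℕ} (grp : Fin n → Fin g) :=
  (q : Fin g) → GrpProfile m grp q → Finset (Fin (m + 1))

def TopRanged {m n g : ℕ} (grp : Fin n → Fin g) (ψ : RepScenario m grp) (q : Fin g) : Prop :=
  ∀ Pq : GrpProfile m grp q, ∃ a ∈ ψ q Pq, ∃ i j : {i : Fin n // grp i = q},
    peak (Pq i) ≤ a ∧ a ≤ peak (Pq j)

/-- `ψ` is compliant with `κ`: each `ψ q` is top-ranged and always selects an
interval of exactly `κ q` consecutive alternatives. -/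
def Compliant {m n g : ℕ} (grp : Fin n → Fin g) (κ : Fin g → ℕ)
    (ψ : RepScenario m grp) : Prop :=
  ∀ q, TopRanged grp ψ q ∧ ∀ Pq, ∃ x y : Fin (m + 1),
    x ≤ y ∧ (y : ℕ) + 1 = (x : ℕ) + κ q ∧ ψ q Pq = Finset.Icc x y

def GroupWeakFair {m n g : ℕ} (grp : Fin n → Fin g) (ψ : RepScenario m grp)
    (η : Fin g → ℝ) (φ : RSCF m n) : Prop :=
  ∀ (P : Profile m n) (q : Fin g), η q ≤ probOn φ P (ψ q (restrict grp P q))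

def GroupStrongFair {m n g : ℕ} (grp : Fin n → Fin g) (ψ : RepScenario m grp)
    (η : Fin g → ℝ) (φ : RSCF m n) : Prop :=
  ∀ (P : Profile m n) (q : Fin g), ∃ a ∈ ψ q (restrict grp P q), η q ≤ φ P a

/-- `a` is feasible at `(z₁, z₂; ψ q)`. -/
def FeasibleAt {m n g : ℕ} (grp : Fin n → Fin g) (ψ : RepScenario m grp) (q : Fin g)
    (a : Fin (m + 1)) (z₁ z₂ : ℕ) : Prop :=
  ∃ (Pq : GrpProfile m grp q) (c : Fin (m + 1)),
    a ∈ ψ q Pq ∧ (∀ b ∈ ψ q Pq, a ≤ b) ∧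
    c ∈ ψ q Pq ∧ (∀ b ∈ ψ q Pq, b ≤ c) ∧
    (univ.filter fun i : {i : Fin n // grp i = q} => peak (Pq i) < a).card = z₁ ∧
    (univ.filter fun i : {i : Fin n // grp i = q} => c < peak (Pq i)).card = gsize grp q - z₂

/-- The set `{a_x, …, a_{x+k-1}}` is feasible at `(z 0, …, z k; ψ q)`. -/
def SetFeasibleAt {m n g : ℕ} (grp : Fin n → Fin g) (ψ : RepScenario m grp) (q : Fin g)
    (x : Fin (m + 1)) (k : ℕ) (z : Fin (k + 1) → ℕ) : Prop :=
  ∃ Pq : GrpProfile m grp q,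
    x ∈ ψ q Pq ∧ (∀ b ∈ ψ q Pq, x ≤ b) ∧
    (univ.filter fun i : {i : Fin n // grp i = q} => peak (Pq i) < x).card = z 0 ∧
    ∀ j : Fin k, (univ.filter fun i : {i : Fin n // grp i = q} =>
      (peak (Pq i) : ℕ) ≤ (x : ℕ) + (j : ℕ)).card = z j.succ

/-! ### Individual fairness -/

def IndWeakFair {m n : ℕ} (κ : Fin n → ℕ) (η : Fin n → ℝ) (φ : RSCF m n) : Prop :=
  ∀ (P : Profile m n) (i : Fin n), η i ≤ probOn φ P (topSet (P i) (κ i))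

def IndStrongFair {m n : ℕ} (κ : Fin n → ℕ) (η : Fin n → ℝ) (φ : RSCF m n) : Prop :=
  ∀ (P : Profile m n) (i : Fin n), ∃ a ∈ topSet (P i) (κ i), η i ≤ φ P a

/-! ### Median rules -/

/-- The median of the `n` peaks and the `n+1` parameters `β 0, …, β n`. -/
def medianOutcome {m n : ℕ} (β : Fin (n + 1) → Fin (m + 1)) (P : Profile m n) :
    Fin (m + 1) :=
  (Multiset.sort
    ((univ.val.map fun i : Fin n => peak (P i)) +
      (univ.val.map fun j : Fin (n + 1) => β j)) (· ≤ ·)).getD n 0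

def MedianParams {m n : ℕ} (β : Fin (n + 1) → Fin (m + 1)) : Prop :=
  β 0 = 0 ∧ β (Fin.last n) = Fin.last m ∧ Monotone β
open Function

/-!
For a unanimous strategy-proof `φ`, the cumulative probability `F_t(P) = φ_P([a_1, a_t])`
depends only on which agents have peak `⪯ a_t`. Replacing these agents one at a time, in order
of increasing peak, by the preference `a_t ≻ a_{t-1} ≻ ⋯ ≻ a_1 ≻ a_{t+1} ≻ ⋯ ≻ a_m` leaves `F_t`
unchanged by strategy-proofness: the replaced agent's upper contour set at `a_t` is an interval
`[l, a_t]`, and no probability lies below `l` since all peaks are `⪰ l`. Agents with peak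
`≻ a_t` are treated symmetrically, by reversing the order of `A`. Group-wise anonymity reduces
this set of agents to its group counts `α(t; P)`, so `β_γ` can be taken to be `φ` at a profile
where `γ_q` members of each `N_q` have peak `a_1` and all others have peak `a_m`; monotonicity
of `β` is strategy-proofness for one agent moving its peak from `a_m` to `a_1`.

Conversely, for a PFGBR `F_t(P) = β_{α(t;P)}([a_1, a_t])`. An agent's upper contour set is an
interval `[a_l, a_r]` around its peak, of probability `F_r - F_{l-1}`, and a misreport can only
lower `α(r)` and raise `α(l-1)`.
-/

lemma filter_update_eq_erase {α β : Type*} [Fintype α] [DecidableEq α] (f : α → β) (j : α)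
    {v : β} {p : β → Prop} [DecidablePred p] (hv : ¬ p v) :
    ({i | p (update f j v i)} : Finset α) = ({i | p (f i)} : Finset α).erase j := by
  ext i
  by_cases h : i = j <;> simp [h, hv]

section FinIntervals
variable {m : ℕ}

lemma Fin.Iio_succ_eq_Iic_castSucc (t : Fin m) : Iio t.succ = Iic t.castSucc := by
  ext b
  simp [Fin.lt_def, Fin.le_def]

lemma Fin.compl_Iic_castSucc (t : Fin m) : (Iic t.castSucc)ᶜ = Ici t.succ := by
  ext b
  simp [Fin.le_def]

lemma Fin.Iic_last_eq_univ : Iic (Fin.last m) = univ := by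
  ext b
  simp [Fin.le_last]

lemma Fin.Iio_zero_eq_empty : Iio (0 : Fin (m + 1)) = ∅ := by
  ext b
  simp

end FinIntervals

section GroupCount
variable {α β : Type*} [Fintype α] [DecidableEq β]

def grpCount (grp : α → β) (p : α → Prop) [DecidablePred p] (q : β) : ℕ :=
  #{i | grp i = q ∧ p i}

lemma grpCount_mono (grp : α → β) {p p' : α → Prop} [DecidablePred p] [DecidablePred p']
    (h : ∀ i, p i → p' i) (q : β) : grpCount grp p q ≤ grpCount grp p' q :=
  card_le_card (monotone_filter_right _ fun i _ hi => ⟨hi.1, h i hi.2⟩)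

lemma grpCount_comp_perm (grp : α → β) (p : α → Prop) [DecidablePred p]
    {π : Equiv.Perm α} (hπ : ∀ i, grp (π i) = grp i) (q : β) :
    grpCount grp (fun i => p (π i)) q = grpCount grp p q :=
  card_equiv π (by simp [hπ])

lemma exists_perm_of_grpCount_eq (grp : α → β) {p p' : α → Prop} [DecidablePred p]
    [DecidablePred p'] (h : ∀ q, grpCount grp p q = grpCount grp p' q) :
    ∃ π : Equiv.Perm α, (∀ i, grp (π i) = grp i) ∧ ∀ i, p (π i) ↔ p' i := by
  have hcompl (r : α → Prop) [DecidablePred r] (q : β) :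
      #{i | grp i = q ∧ ¬ r i} = #{i | grp i = q} - grpCount grp r q := by
    rw [grpCount, ← card_filter_add_card_filter_not (s := {i | grp i = q}) r]
    simp [filter_filter]
  have hfibre (c : β × Bool) : Fintype.card {i // (grp i, decide (p' i)) = c} =
      Fintype.card {i // (grp i, decide (p i)) = c} := by
    obtain ⟨q, _ | _⟩ := c
    · simpa [Fintype.card_subtype, hcompl] using congrArg (#{i | grp i = q} - ·) (h q).symm
    · simpa [Fintype.card_subtype, grpCount] using (h q).symm
  let π : Equiv.Perm α := Equiv.ofFiberEquiv fun c => Fintype.equivOfCardEq (hfibre c)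
  have hπ (i : α) : (grp (π i), decide (p (π i))) = (grp i, decide (p' i)) :=
    Equiv.ofFiberEquiv_map (fun c => Fintype.equivOfCardEq (hfibre c)) i
  exact ⟨π, fun i => congrArg Prod.fst (hπ i), fun i => by simpa using congrArg Prod.snd (hπ i)⟩

lemma exists_subset_grpCount_eq [DecidableEq α] (grp : α → β) (S : Finset α) (c : β → ℕ)
    (hc : ∀ q, c q ≤ grpCount grp (· ∈ S) q) :
    ∃ T ⊆ S, ∀ q, grpCount grp (· ∈ T) q = c q := by
  choose T hTS hT using fun q => exists_subset_card_eq (hc q)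
  have hgrp (q : β) (i : α) (hi : i ∈ T q) : grp i = q ∧ i ∈ S := by simpa using hTS q hi
  refine ⟨univ.filter fun i => i ∈ T (grp i), fun i hi => (hgrp _ i (by simpa using hi)).2,
    fun q => ?_⟩
  rw [← hT q, grpCount]
  congr 1
  ext i
  simp only [mem_filter, mem_univ, true_and]
  exact ⟨fun ⟨hiq, hi⟩ => hiq ▸ hi, fun hi => ⟨(hgrp q i hi).1, (hgrp q i hi).1 ▸ hi⟩⟩

end GroupCount

section GroupCountVectors
variable {m n g : ℕ}

lemma grpCount_le_gsize (grp : Fin n → Fin g) (p : Fin n → Prop) [DecidablePred p]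
    (q : Fin g) : grpCount grp p q ≤ gsize grp q :=
  card_le_card (monotone_filter_right _ fun _ _ hi => hi.1)

lemma alphaVec_gammaValid (grp : Fin n → Fin g) (P : Profile m n) (t : Fin (m + 1)) :
    GammaValid grp (alphaVec grp P t) :=
  grpCount_le_gsize grp _

lemma alphaLtVec_gammaValid (grp : Fin n → Fin g) (P : Profile m n) (t : Fin (m + 1)) :
    GammaValid grp (alphaLtVec grp P t) :=
  grpCount_le_gsize grp _

lemma alphaLtVec_succ (grp : Fin n → Fin g) (P : Profile m n) (t : Fin m) :
    alphaLtVec grp P t.succ = alphaVec grp P t.castSucc := by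
  funext q
  ext
  simp [alphaLtVec, alphaVec, Fin.le_castSucc_iff]

lemma eq_empty_of_grpCount_eq_zero (grp : Fin n → Fin g) {S : Finset (Fin n)}
    (h : ∀ q, grpCount grp (· ∈ S) q = 0) : S = ∅ := by
  simp only [grpCount, card_eq_zero, filter_eq_empty_iff] at h
  exact eq_empty_of_forall_notMem fun i hi => h (grp i) (mem_univ i) ⟨rfl, hi⟩

lemma eq_univ_of_grpCount_eq_gsize (grp : Fin n → Fin g) {S : Finset (Fin n)}
    (h : ∀ q, grpCount grp (· ∈ S) q = gsize grp q) : S = univ := by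
  refine eq_univ_of_forall fun i => ?_
  by_contra hi
  have hlt : grpCount grp (· ∈ S) (grp i) < gsize grp (grp i) :=
    card_lt_card <| (monotone_filter_right _ fun _ _ hj => hj.1).ssubset_of_not_subset
      fun hsub => hi (mem_filter.1 (hsub (by simp))).2.2
  exact hlt.ne (h (grp i))

lemma exists_grpCount_eq {grp : Fin n → Fin g} {γ : Fin g → Fin (n + 1)}
    (hγ : GammaValid grp γ) : ∃ S : Finset (Fin n), ∀ q, grpCount grp (· ∈ S) q = γ q := by
  obtain ⟨S, -, hS⟩ := exists_subset_grpCount_eq grp univ (fun q => γ q)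
    fun q => by simpa [grpCount, gsize] using hγ q
  exact ⟨S, hS⟩

end GroupCountVectors

namespace IsProb
variable {m : ℕ} {p : Fin (m + 1) → ℝ}

lemma sum_le_sum_of_subset (hp : IsProb p) {B C : Finset (Fin (m + 1))} (h : B ⊆ C) :
    ∑ b ∈ B, p b ≤ ∑ b ∈ C, p b :=
  sum_le_sum_of_subset_of_nonneg h fun b _ _ => hp.1 b

lemma sum_le_one (hp : IsProb p) (B : Finset (Fin (m + 1))) : ∑ b ∈ B, p b ≤ 1 :=
  hp.2 ▸ hp.sum_le_sum_of_subset (subset_univ B)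

lemma sum_eq_one_of_mem (hp : IsProb p) {a : Fin (m + 1)} (ha : p a = 1)
    {B : Finset (Fin (m + 1))} (hB : a ∈ B) : ∑ b ∈ B, p b = 1 :=
  le_antisymm (hp.sum_le_one B) (ha ▸ single_le_sum (fun b _ => hp.1 b) hB)

lemma sum_eq_zero_of_notMem (hp : IsProb p) {a : Fin (m + 1)} (ha : p a = 1)
    {B : Finset (Fin (m + 1))} (hB : a ∉ B) : ∑ b ∈ B, p b = 0 := by
  have h := hp.sum_le_one (insert a B)
  rw [sum_insert hB, ha] at h
  exact le_antisymm (by linarith) (sum_nonneg fun b _ => hp.1 b)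

lemma sum_eq_one_of_subset (hp : IsProb p) {B C : Finset (Fin (m + 1))}
    (hB : ∑ b ∈ B, p b = 1) (h : B ⊆ C) : ∑ b ∈ C, p b = 1 :=
  le_antisymm (hp.sum_le_one C) (hB ▸ hp.sum_le_sum_of_subset h)

lemma sum_inter_eq_of_sum_eq_one (hp : IsProb p) {B C : Finset (Fin (m + 1))}
    (hC : ∑ b ∈ C, p b = 1) : ∑ b ∈ B ∩ C, p b = ∑ b ∈ B, p b := by
  have hcompl : ∑ b ∈ Cᶜ, p b = 0 := by linarith [sum_add_sum_compl C p, hp.2]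
  have hdiff : ∑ b ∈ B \ C, p b = 0 :=
    le_antisymm (hcompl ▸ hp.sum_le_sum_of_subset fun b hb => by simp_all)
      (sum_nonneg fun b _ => hp.1 b)
  linarith [sum_inter_add_sum_sdiff B C p]

end IsProb

section ProbOn
variable {m n : ℕ} {φ : RSCF m n}

lemma probOn_Iic_eq_add (P : Profile m n) (t : Fin (m + 1)) :
    probOn φ P (Iic t) = φ P t + probOn φ P (Iio t) := by
  rw [probOn, ← Iio_insert, sum_insert (by simp), probOn]

lemma probOn_Iic_castSucc_eq_one_sub (hφ : IsRSCF φ) (P : Profile m n) (t : Fin m) :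
    probOn φ P (Iic t.castSucc) = 1 - probOn φ P (Ici t.succ) := by
  rw [← Fin.compl_Iic_castSucc, ← (hφ P).2, ← sum_add_sum_compl (Iic t.castSucc)]
  simp [probOn]

end ProbOn

section UpperContour
variable {m : ℕ}

lemma mem_UC_self (P : SPPref m) (a : Fin (m + 1)) : a ∈ UC P a := by
  simp [UC]

lemma peak_mem_UC (P : SPPref m) (a : Fin (m + 1)) : peak P ∈ UC P a := by
  simp [UC, peak]

lemma UC_nonempty (P : SPPref m) (a : Fin (m + 1)) : (UC P a).Nonempty :=
  ⟨a, mem_UC_self P a⟩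

lemma UC_peak (P : SPPref m) : UC P (peak P) = {peak P} := by
  ext b
  simp [UC, peak, Equiv.symm_apply_eq]

lemma mem_UC_of_le_of_le {P : SPPref m} {a b c d : Fin (m + 1)} (hb : b ∈ UC P a)
    (hd : d ∈ UC P a) (hbc : b ≤ c) (hcd : c ≤ d) : c ∈ UC P a := by
  simp only [UC, mem_filter, mem_univ, true_and] at *
  rcases le_or_gt (peak P) c with hc | hc
  · rcases hcd.eq_or_lt with rfl | hcd
    · exact hd
    · exact (P.2 c d (.inl ⟨hc, hcd⟩)).le.trans hd
  · rcases hbc.eq_or_lt with rfl | hbc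
    · exact hb
    · exact (P.2 c b (.inr ⟨hbc, hc.le⟩)).le.trans hb

lemma UC_eq_Icc (P : SPPref m) (a : Fin (m + 1)) :
    UC P a = Icc ((UC P a).min' (UC_nonempty P a)) ((UC P a).max' (UC_nonempty P a)) := by
  ext c
  refine ⟨fun hc => mem_Icc.2 ⟨min'_le _ _ hc, le_max' _ _ hc⟩, fun hc => ?_⟩
  exact mem_UC_of_le_of_le (min'_mem _ _) (max'_mem _ _) (mem_Icc.1 hc).1 (mem_Icc.1 hc).2

lemma UC_subset_Iic {P : SPPref m} {y : Fin (m + 1)} (hy : peak P ≤ y) : UC P y ⊆ Iic y := by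
  intro c hc
  by_contra hyc
  simp only [UC, mem_filter, mem_univ, true_and] at hc
  exact (P.2 y c (.inl ⟨hy, not_le.1 (by simpa using hyc)⟩)).not_ge hc

lemma UC_eq_Icc_of_peak_le {P : SPPref m} {y : Fin (m + 1)} (hy : peak P ≤ y) :
    UC P y = Icc ((UC P y).min' (UC_nonempty P y)) y := by
  conv_lhs => rw [UC_eq_Icc P y]
  congr
  exact le_antisymm ((UC P y).max'_le _ _ fun c hc => mem_Iic.1 (UC_subset_Iic hy hc))
    (le_max' _ _ (mem_UC_self P y))

end UpperContour

namespace SPPref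
variable {m : ℕ}

def rev (P : SPPref m) : SPPref m :=
  ⟨P.val.trans Fin.revPerm, fun a b h => by
    simpa using P.2 a.rev b.rev (by
      simp only [Equiv.trans_apply, Fin.revPerm_apply] at h
      rw [Fin.rev_le_iff, Fin.le_rev_iff, ← Fin.rev_lt_rev (i := a), ← Fin.rev_lt_rev (j := a)] at h
      tauto)⟩

lemma peak_rev (P : SPPref m) : peak P.rev = (peak P).rev := rfl

lemma rev_rev (P : SPPref m) : P.rev.rev = P :=
  Subtype.ext (Equiv.ext fun _ => Fin.rev_rev _)

lemma map_revPerm_UC (P : SPPref m) (a : Fin (m + 1)) :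
    (UC P a).map Fin.revPerm.toEmbedding = UC P.rev a.rev := by
  ext b
  simp [UC, rev]

end SPPref

namespace RSCF
variable {m n : ℕ}

def rev (φ : RSCF m n) : RSCF m n := fun P a => φ (SPPref.rev ∘ P) a.rev

lemma probOn_rev (φ : RSCF m n) (P : Profile m n) (B : Finset (Fin (m + 1))) :
    probOn φ.rev P B = probOn φ (SPPref.rev ∘ P) (B.map Fin.revPerm.toEmbedding) := by
  simp [probOn, rev, sum_map]

lemma rev_comp_rev (P : Profile m n) : SPPref.rev ∘ (SPPref.rev ∘ P) = P :=
  funext fun i => SPPref.rev_rev (P i)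

end RSCF

section Reversal
variable {m n : ℕ} {φ : RSCF m n}

lemma IsRSCF.rev (hφ : IsRSCF φ) : IsRSCF φ.rev := fun _ =>
  ⟨fun _ => (hφ _).1 _, (Equiv.sum_comp Fin.revPerm _).trans (hφ _).2⟩

lemma Unanimous.rev (hun : Unanimous φ) : Unanimous φ.rev := fun P a h =>
  hun _ a.rev fun i => by simp [SPPref.peak_rev, h i]

lemma StrategyProof.rev (hsp : StrategyProof φ) : StrategyProof φ.rev := by
  intro i P P' a
  simpa [RSCF.probOn_rev, comp_update, SPPref.map_revPerm_UC] using
    hsp i (SPPref.rev ∘ P) P'.rev a.rev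

end Reversal

section ExtremePreferences
variable {m : ℕ}

def leftRank (y k : Fin (m + 1)) : Fin (m + 1) :=
  if k ≤ y then ⟨y - k, by omega⟩ else k

lemma leftRank_involutive (y : Fin (m + 1)) : Involutive (leftRank y) := by
  intro k
  unfold leftRank
  split_ifs <;> simp only [Fin.ext_iff, Fin.le_def] at * <;> omega

lemma leftRank_apply_zero (y : Fin (m + 1)) : leftRank y 0 = y := by
  simp [leftRank]

lemma leftRank_zero : leftRank (0 : Fin (m + 1)) = id := by
  ext k
  by_cases hk : k = 0 <;> simp [leftRank, hk]

/-- The preference `y ≻ y-1 ≻ ⋯ ≻ 0 ≻ y+1 ≻ ⋯ ≻ m`. -/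
def leftPref (y : Fin (m + 1)) : SPPref m :=
  ⟨(leftRank_involutive y).toPerm, fun a b h => by
    simp only [Involutive.toPerm_symm, Involutive.coe_toPerm, leftRank_apply_zero] at h ⊢
    unfold leftRank
    split_ifs <;> (simp only [Fin.lt_def, Fin.le_def] at *; omega)⟩

lemma peak_leftPref (y : Fin (m + 1)) : peak (leftPref y) = y :=
  leftRank_apply_zero y

lemma UC_leftPref_self (y : Fin (m + 1)) : UC (leftPref y) y = {y} := by
  simpa [peak_leftPref] using UC_peak (leftPref y)

lemma UC_leftPref_at_zero (y : Fin (m + 1)) : UC (leftPref y) 0 = Iic y := by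
  ext b
  simp only [UC, leftPref, Involutive.toPerm_symm, Involutive.coe_toPerm, leftRank_apply_zero,
    mem_filter, mem_univ, true_and, mem_Iic]
  unfold leftRank
  split_ifs with h
  · exact iff_of_true (Fin.le_def.2 (Nat.sub_le _ _)) h
  · rfl

lemma UC_leftPref_zero (t : Fin (m + 1)) : UC (leftPref 0) t = Iic t := by
  ext b
  simp [UC, leftPref, leftRank_zero]

def rightPref (x : Fin (m + 1)) : SPPref m := (leftPref x.rev).rev

lemma peak_rightPref (x : Fin (m + 1)) : peak (rightPref x) = x := by
  simp [rightPref, SPPref.peak_rev, peak_leftPref]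

end ExtremePreferences

section Replacement
variable {m n : ℕ} {φ : RSCF m n}

theorem probOn_Icc_eq_one_of_UC_subset (hφ : IsRSCF φ) (hun : Unanimous φ)
    (hsp : StrategyProof φ) {l y : Fin (m + 1)} (hly : l ≤ y) (P : Profile m n)
    (hP : ∀ i, UC (P i) y ⊆ Icc l y) : probOn φ P (Icc l y) = 1 := by
  induction hk : #{i | P i ≠ leftPref y} generalizing P l with
  | zero =>
    have hP' : ∀ i, P i = leftPref y := by simpa [filter_eq_empty_iff] using hk
    exact (hφ P).sum_eq_one_of_mem (hun P y fun i => by rw [hP' i, peak_leftPref])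
      (mem_Icc.2 ⟨hly, le_rfl⟩)
  | succ k ih =>
    let low i := (UC (P i) y).min' (UC_nonempty (P i) y)
    -- `j` has the leftmost upper contour set, so once `j` reports `leftPref y` every upper
    -- contour set at `y` lies in `UC (P j) y`
    obtain ⟨j, hj, hjmin⟩ :=
      exists_min_image {i | P i ≠ leftPref y} low (card_pos.1 (by omega))
    have hjy : peak (P j) ≤ y := (mem_Icc.1 (hP j (peak_mem_UC _ _))).2
    have hleft : UC (leftPref y) y ⊆ Icc (low j) y := by
      simpa [UC_leftPref_self] using min'_le _ _ (mem_UC_self (P j) y)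
    have hupdate : probOn φ (update P j (leftPref y)) (Icc (low j) y) = 1 := by
      refine ih (min'_le _ _ (mem_UC_self (P j) y)) _ (fun i => ?_) ?_
      · rcases eq_or_ne i j with rfl | hij
        · simpa using hleft
        · rw [update_of_ne hij]
          by_cases hi : P i = leftPref y
          · exact hi ▸ hleft
          · intro c hc
            exact mem_Icc.2 ⟨(hjmin i (by simpa using hi)).trans (min'_le _ _ hc),
              (mem_Icc.1 (hP i hc)).2⟩
      · rw [filter_update_eq_erase P j (p := (· ≠ leftPref y)) (by simp), card_erase_of_mem hj,
          hk, Nat.add_sub_cancel]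
    have hPj : probOn φ P (UC (P j) y) = 1 :=
      le_antisymm ((hφ P).sum_le_one _)
        (hupdate ▸ UC_eq_Icc_of_peak_le hjy ▸ hsp j P (leftPref y) y)
    rw [UC_eq_Icc_of_peak_le hjy] at hPj
    exact (hφ P).sum_eq_one_of_subset hPj
      (Icc_subset_Icc (mem_Icc.1 (hP j (min'_mem _ _))).1 le_rfl)

theorem probOn_Iic_eq_one_of_peak_le (hφ : IsRSCF φ) (hun : Unanimous φ)
    (hsp : StrategyProof φ) {y : Fin (m + 1)} {P : Profile m n} (h : ∀ i, peak (P i) ≤ y) :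
    probOn φ P (Iic y) = 1 := by
  have hIcc : Icc 0 y = Iic y := by
    ext
    simp
  rw [← hIcc]
  exact probOn_Icc_eq_one_of_UC_subset hφ hun hsp (Fin.zero_le y) P
    fun i => hIcc ▸ UC_subset_Iic (h i)

theorem probOn_Ici_eq_one_of_le_peak (hφ : IsRSCF φ) (hun : Unanimous φ)
    (hsp : StrategyProof φ) {x : Fin (m + 1)} {P : Profile m n} (h : ∀ i, x ≤ peak (P i)) :
    probOn φ P (Ici x) = 1 := by
  have := probOn_Iic_eq_one_of_peak_le hφ.rev hun.rev hsp.rev (P := SPPref.rev ∘ P)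
    (y := x.rev) fun i => Fin.rev_le_rev.2 (h i)
  rwa [RSCF.probOn_rev, RSCF.rev_comp_rev, Fin.map_revPerm_Iic, Fin.rev_rev] at this

theorem probOn_Iic_update_leftPref (hφ : IsRSCF φ) (hun : Unanimous φ) (hsp : StrategyProof φ)
    {t : Fin (m + 1)} {P : Profile m n} {j : Fin n} (hjt : peak (P j) ≤ t)
    (hjmin : ∀ i, peak (P j) ≤ peak (P i)) :
    probOn φ (update P j (leftPref t)) (Iic t) = probOn φ P (Iic t) := by
  set l := (UC (P j) t).min' (UC_nonempty (P j) t)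
  have hlj : l ≤ peak (P j) := min'_le _ _ (peak_mem_UC _ _)
  apply le_antisymm
  · have hl : ∀ i, l ≤ peak (update P j (leftPref t) i) := by
      intro i
      rcases eq_or_ne i j with rfl | hij
      · simpa [peak_leftPref] using hlj.trans hjt
      · simpa [hij] using hlj.trans (hjmin i)
    calc probOn φ (update P j (leftPref t)) (Iic t)
        = probOn φ (update P j (leftPref t)) (Iic t ∩ Ici l) :=
          ((hφ _).sum_inter_eq_of_sum_eq_one (probOn_Ici_eq_one_of_le_peak hφ hun hsp hl)).symm
      _ = probOn φ (update P j (leftPref t)) (UC (P j) t) := by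
          rw [UC_eq_Icc_of_peak_le hjt]
          congr 1
          ext
          simp [l, and_comm]
      _ ≤ probOn φ P (UC (P j) t) := hsp j P (leftPref t) t
      _ ≤ probOn φ P (Iic t) := (hφ P).sum_le_sum_of_subset (UC_subset_Iic hjt)
  · simpa [UC_leftPref_at_zero] using hsp j (update P j (leftPref t)) (P j) 0

theorem probOn_Iic_ite_leftPref (hφ : IsRSCF φ) (hun : Unanimous φ) (hsp : StrategyProof φ)
    (t : Fin (m + 1)) (P : Profile m n) :
    probOn φ (fun i => if peak (P i) ≤ t then leftPref t else P i) (Iic t) =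
      probOn φ P (Iic t) := by
  induction hk : #{i | peak (P i) ≤ t ∧ P i ≠ leftPref t} generalizing P with
  | zero =>
    congr
    funext i
    split_ifs with hi
    · by_contra hne
      exact (filter_eq_empty_iff.1 (card_eq_zero.1 hk)) (mem_univ i) ⟨hi, Ne.symm hne⟩
    · rfl
  | succ k ih =>
    obtain ⟨j, hj, hjmin⟩ := exists_min_image {i | peak (P i) ≤ t ∧ P i ≠ leftPref t}
      (fun i => peak (P i)) (card_pos.1 (by omega))
    have hjt : peak (P j) ≤ t := (mem_filter.1 hj).2.1
    have hjmin' : ∀ i, peak (P j) ≤ peak (P i) := by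
      intro i
      by_cases hi : peak (P i) ≤ t ∧ P i ≠ leftPref t
      · exact hjmin i (by simpa using hi)
      · by_cases hit : peak (P i) ≤ t
        · rw [not_not.1 (not_and.1 hi hit), peak_leftPref]
          exact hjt
        · exact hjt.trans (le_of_not_ge hit)
    have hcard : #{i | peak (update P j (leftPref t) i) ≤ t ∧
        update P j (leftPref t) i ≠ leftPref t} = k := by
      rw [filter_update_eq_erase P j (p := fun Q => peak Q ≤ t ∧ Q ≠ leftPref t) (by simp),
        card_erase_of_mem hj, hk, Nat.add_sub_cancel]
    rw [← probOn_Iic_update_leftPref hφ hun hsp hjt hjmin', ← ih _ hcard]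
    congr
    funext i
    rcases eq_or_ne i j with rfl | hij
    · simp [peak_leftPref, hjt]
    · simp [hij]

theorem probOn_Ici_ite_rightPref (hφ : IsRSCF φ) (hun : Unanimous φ) (hsp : StrategyProof φ)
    (s : Fin (m + 1)) (P : Profile m n) :
    probOn φ (fun i => if s ≤ peak (P i) then rightPref s else P i) (Ici s) =
      probOn φ P (Ici s) := by
  have := probOn_Iic_ite_leftPref hφ.rev hun.rev hsp.rev s.rev (SPPref.rev ∘ P)
  rw [RSCF.probOn_rev, RSCF.probOn_rev, RSCF.rev_comp_rev, Fin.map_revPerm_Iic,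
    Fin.rev_rev] at this
  convert this using 2
  funext i
  simp [apply_ite SPPref.rev, SPPref.peak_rev, SPPref.rev_rev, rightPref]

theorem probOn_Iic_eq_of_peak_le_iff (hφ : IsRSCF φ) (hun : Unanimous φ)
    (hsp : StrategyProof φ) {t : Fin (m + 1)} {P P' : Profile m n}
    (h : ∀ i, peak (P i) ≤ t ↔ peak (P' i) ≤ t) :
    probOn φ P (Iic t) = probOn φ P' (Iic t) := by
  induction t using Fin.lastCases with
  | last => simp only [probOn, Fin.Iic_last_eq_univ, (hφ P).2, (hφ P').2]
  | cast t =>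
    let W (Q : Profile m n) : Profile m n := fun i =>
      if peak (Q i) ≤ t.castSucc then leftPref t.castSucc else rightPref t.succ
    suffices hW : ∀ Q, probOn φ Q (Iic t.castSucc) = probOn φ (W Q) (Iic t.castSucc) by
      rw [hW P, hW P']
      congr 1
      funext i
      simp [W, h i]
    intro Q
    rw [← probOn_Iic_ite_leftPref hφ hun hsp, probOn_Iic_castSucc_eq_one_sub hφ,
      ← probOn_Ici_ite_rightPref hφ hun hsp, ← probOn_Iic_castSucc_eq_one_sub hφ]
    congr 1
    funext i
    by_cases hi : peak (Q i) ≤ t.castSucc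
    · simp [W, hi, peak_leftPref]
    · simp [W, hi, ← Fin.castSucc_lt_iff_succ_le, lt_of_not_ge hi]

theorem probOn_Iic_eq_of_alphaVec_eq {g : ℕ} (hφ : IsRSCF φ) (hun : Unanimous φ)
    (hsp : StrategyProof φ) {grp : Fin n → Fin g} (hga : GroupAnon grp φ)
    {t : Fin (m + 1)} {P P' : Profile m n} (h : alphaVec grp P t = alphaVec grp P' t) :
    probOn φ P (Iic t) = probOn φ P' (Iic t) := by
  obtain ⟨π, hπ, hπP⟩ := exists_perm_of_grpCount_eq grp (p := fun i => peak (P i) ≤ t)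
    (p' := fun i => peak (P' i) ≤ t) fun q => congrArg Fin.val (congrFun h q)
  rw [probOn, hga π hπ P]
  exact probOn_Iic_eq_of_peak_le_iff hφ hun hsp hπP

end Replacement

section ExtremeProfile
variable {m n g : ℕ} {φ : RSCF m n}

def extremeProfile (S : Finset (Fin n)) : Profile m n :=
  fun i => if i ∈ S then leftPref 0 else rightPref (Fin.last m)

lemma peak_extremeProfile_le_castSucc_iff (S : Finset (Fin n)) (i : Fin n) (t : Fin m) :
    peak (extremeProfile (m := m) S i) ≤ t.castSucc ↔ i ∈ S := by
  by_cases hi : i ∈ S <;> simp [extremeProfile, hi, peak_leftPref, peak_rightPref]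

lemma alphaVec_extremeProfile (grp : Fin n → Fin g) {S : Finset (Fin n)}
    {γ : Fin g → Fin (n + 1)} (hS : ∀ q, grpCount grp (· ∈ S) q = γ q) (t : Fin m) :
    alphaVec grp (extremeProfile S) t.castSucc = γ :=
  funext fun q => Fin.ext <| by
    simpa [alphaVec, grpCount, peak_extremeProfile_le_castSucc_iff] using hS q

lemma probOn_Iic_extremeProfile_le_insert (hsp : StrategyProof φ) (t : Fin (m + 1))
    (S : Finset (Fin n)) (a : Fin n) :
    probOn φ (extremeProfile S) (Iic t) ≤ probOn φ (extremeProfile (insert a S)) (Iic t) := by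
  by_cases ha : a ∈ S
  · rw [insert_eq_of_mem ha]
  have hS : update (extremeProfile (insert a S)) a (rightPref (Fin.last m)) =
      extremeProfile S := by
    funext i
    rcases eq_or_ne i a with rfl | hia
    · simp [extremeProfile, ha]
    · simp [extremeProfile, hia]
  simpa [hS, extremeProfile, UC_leftPref_zero] using
    hsp a (extremeProfile (insert a S)) (rightPref (Fin.last m)) t

lemma monotone_probOn_Iic_extremeProfile (hsp : StrategyProof φ) (t : Fin (m + 1)) :
    Monotone fun S : Finset (Fin n) => probOn φ (extremeProfile S) (Iic t) := by
  intro S' S hS'S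
  suffices h : ∀ T : Finset (Fin n),
      probOn φ (extremeProfile S') (Iic t) ≤ probOn φ (extremeProfile (S' ∪ T)) (Iic t) by
    simpa [union_eq_right.2 hS'S] using h S
  intro T
  induction T using Finset.induction_on with
  | empty => simp
  | insert a T _ ih =>
    rw [union_insert]
    exact ih.trans (probOn_Iic_extremeProfile_le_insert hsp t _ a)

theorem probOn_Iic_eq_extremeProfile {grp : Fin n → Fin g} (hφ : IsRSCF φ)
    (hun : Unanimous φ) (hsp : StrategyProof φ) (hga : GroupAnon grp φ) (P : Profile m n)
    (t : Fin (m + 1)) {S : Finset (Fin n)}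
    (hS : ∀ q, grpCount grp (· ∈ S) q = alphaVec grp P t q) :
    probOn φ P (Iic t) = probOn φ (extremeProfile S) (Iic t) := by
  induction t using Fin.lastCases with
  | last => simp only [probOn, Fin.Iic_last_eq_univ, (hφ _).2]
  | cast t =>
    exact probOn_Iic_eq_of_alphaVec_eq hφ hun hsp hga (alphaVec_extremeProfile grp hS t).symm

theorem isPFGBRWith_extremeProfile {grp : Fin n → Fin g} (hφ : IsRSCF φ) (hun : Unanimous φ)
    (hsp : StrategyProof φ) (hga : GroupAnon grp φ) {S : (Fin g → Fin (n + 1)) → Finset (Fin n)}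
    (hS : ∀ γ, GammaValid grp γ → ∀ q, grpCount grp (· ∈ S γ) q = γ q) :
    IsPFGBRWith grp (fun γ => φ (extremeProfile (S γ))) φ := by
  have hF (P : Profile m n) (t : Fin (m + 1)) : probOn φ P (Iic t) =
      probOn φ (extremeProfile (S (alphaVec grp P t))) (Iic t) :=
    probOn_Iic_eq_extremeProfile hφ hun hsp hga P t (hS _ (alphaVec_gammaValid grp P t))
  refine ⟨fun γ _ => hφ _, ?_, ?_, ?_, fun P t => ?_⟩
  · have hempty := eq_empty_of_grpCount_eq_zero grp
      (by simpa using hS (fun _ => 0) fun _ => Nat.zero_le _)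
    exact hun _ _ fun i => by simp [hempty, extremeProfile, peak_rightPref]
  · have huniv := eq_univ_of_grpCount_eq_gsize grp (hS (gammaTop grp) fun _ => le_rfl)
    exact hun _ _ fun i => by simp [huniv, extremeProfile, peak_leftPref]
  · intro γ γ' hγ hγ' hle t
    induction t using Fin.lastCases with
    | last => simp only [Fin.Iic_last_eq_univ, (hφ _).2, le_refl]
    | cast t =>
      obtain ⟨T, hTS, hT⟩ := exists_subset_grpCount_eq grp (S γ) (fun q => γ' q)
        fun q => hS γ hγ q ▸ hle q
      calc ∑ b ∈ Iic t.castSucc, φ (extremeProfile (S γ')) b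
          = probOn φ (extremeProfile T) (Iic t.castSucc) :=
            probOn_Iic_eq_extremeProfile hφ hun hsp hga _ _
              (fun q => by rw [hT, alphaVec_extremeProfile grp (hS γ' hγ') t])
        _ ≤ probOn φ (extremeProfile (S γ)) (Iic t.castSucc) :=
            monotone_probOn_Iic_extremeProfile hsp _ hTS
  · have hIio : probOn φ P (Iio t) =
        ∑ b ∈ Iio t, φ (extremeProfile (S (alphaLtVec grp P t))) b := by
      induction t using Fin.cases with
      | zero => simp [probOn, Fin.Iio_zero_eq_empty]
      | succ t => rw [Fin.Iio_succ_eq_Iic_castSucc, alphaLtVec_succ]; exact hF P t.castSucc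
    change φ P t = probOn φ _ (Iic t) - _
    rw [← hF, ← hIio, probOn_Iic_eq_add]
    ring

end ExtremeProfile

namespace IsPFGBRWith
variable {m n g : ℕ} {φ : RSCF m n} {grp : Fin n → Fin g}
  {β : (Fin g → Fin (n + 1)) → Fin (m + 1) → ℝ}

theorem probOn_Iio (h : IsPFGBRWith grp β φ) (P : Profile m n) (t : Fin (m + 1)) :
    probOn φ P (Iio t) = ∑ b ∈ Iio t, β (alphaLtVec grp P t) b := by
  induction t using Fin.induction with
  | zero => simp [probOn, Fin.Iio_zero_eq_empty]
  | succ t ih =>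
    rw [Fin.Iio_succ_eq_Iic_castSucc, alphaLtVec_succ, probOn_Iic_eq_add, ih, h.2.2.2.2]
    ring

theorem probOn_Iic (h : IsPFGBRWith grp β φ) (P : Profile m n) (t : Fin (m + 1)) :
    probOn φ P (Iic t) = ∑ b ∈ Iic t, β (alphaVec grp P t) b := by
  rw [probOn_Iic_eq_add, h.probOn_Iio, h.2.2.2.2]
  ring

theorem sum_Iio_mono (h : IsPFGBRWith grp β φ) {γ γ' : Fin g → Fin (n + 1)}
    (hγ : GammaValid grp γ) (hγ' : GammaValid grp γ') (hle : ∀ q, γ' q ≤ γ q)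
    (t : Fin (m + 1)) : ∑ b ∈ Iio t, β γ' b ≤ ∑ b ∈ Iio t, β γ b := by
  induction t using Fin.cases with
  | zero => simp [Fin.Iio_zero_eq_empty]
  | succ t =>
    rw [Fin.Iio_succ_eq_Iic_castSucc]
    exact h.2.2.2.1 γ γ' hγ hγ' hle _

theorem unanimous (h : IsPFGBRWith grp β φ) : Unanimous φ := by
  intro P a hP
  have hα : alphaVec grp P a = gammaTop grp := by
    funext q
    ext
    simp [alphaVec, gammaTop, gsize, hP]
  have hαlt : alphaLtVec grp P a = fun _ => 0 := by
    funext q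
    ext
    simp [alphaLtVec, hP]
  rw [h.2.2.2.2, hα, hαlt,
    (h.1 _ fun _ => le_rfl).sum_eq_one_of_mem h.2.2.1 (mem_Iic.2 (Fin.zero_le a)),
    (h.1 _ fun _ => Nat.zero_le _).sum_eq_zero_of_notMem h.2.1
      (by simpa using Fin.le_last a), sub_zero]

theorem strategyProof (h : IsPFGBRWith grp β φ) : StrategyProof φ := by
  intro i P P' a
  set Q := update P i P'
  obtain ⟨l, r, hl, hr, hUC⟩ : ∃ l r, l ≤ peak (P i) ∧ peak (P i) ≤ r ∧ UC (P i) a = Icc l r :=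
    ⟨_, _, min'_le _ _ (peak_mem_UC _ _), le_max' _ _ (peak_mem_UC _ _), UC_eq_Icc (P i) a⟩
  have hIcc (R : Profile m n) :
      probOn φ R (Icc l r) = probOn φ R (Iic r) - probOn φ R (Iio l) := by
    have hsub : Iio l ⊆ Iic r := fun b hb => mem_Iic.2 ((mem_Iio.1 hb).le.trans (hl.trans hr))
    have hdiff : Iic r \ Iio l = Icc l r := by
      ext b
      simp [and_comm]
    rw [probOn, probOn, probOn, ← hdiff, sum_sdiff_eq_sub hsub]
  have hle_r (q : Fin g) : alphaVec grp Q r q ≤ alphaVec grp P r q :=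
    grpCount_mono grp (fun j hj => by
      rcases eq_or_ne j i with rfl | hji
      · exact hr
      · simpa [Q, hji] using hj) q
  have hle_l (q : Fin g) : alphaLtVec grp P l q ≤ alphaLtVec grp Q l q :=
    grpCount_mono grp (fun j hj => by
      rcases eq_or_ne j i with rfl | hji
      · exact absurd hl (not_le.2 hj)
      · simpa [Q, hji] using hj) q
  rw [hUC, hIcc, hIcc, h.probOn_Iic, h.probOn_Iic, h.probOn_Iio, h.probOn_Iio]
  have := h.2.2.2.1 _ _ (alphaVec_gammaValid grp P r) (alphaVec_gammaValid grp Q r) hle_r r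
  have := h.sum_Iio_mono (alphaLtVec_gammaValid grp Q l) (alphaLtVec_gammaValid grp P l) hle_l l
  linarith

theorem groupAnon (h : IsPFGBRWith grp β φ) : GroupAnon grp φ := by
  intro π hπ P
  funext t
  have hα : alphaVec grp (fun i => P (π i)) t = alphaVec grp P t :=
    funext fun q => Fin.ext (grpCount_comp_perm grp (fun i => peak (P i) ≤ t) hπ q)
  have hαlt : alphaLtVec grp (fun i => P (π i)) t = alphaLtVec grp P t :=
    funext fun q => Fin.ext (grpCount_comp_perm grp (fun i => peak (P i) < t) hπ q)
  rw [h.2.2.2.2, h.2.2.2.2, hα, hαlt]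

end IsPFGBRWith

theorem unanimous_strategyProof_groupAnon_iff_PFGBR_general {m n g : ℕ}
    (grp : Fin n → Fin g)
    (φ : RSCF m n) (hφ : IsRSCF φ) :
    (Unanimous φ ∧ StrategyProof φ ∧ GroupAnon grp φ) ↔ IsPFGBR grp φ := by
  constructor
  · rintro ⟨hun, hsp, hga⟩
    choose! S hS using fun γ (hγ : GammaValid grp γ) => exists_grpCount_eq hγ
    exact ⟨_, isPFGBRWith_extremeProfile hφ hun hsp hga hS⟩
  · rintro ⟨β, hβ⟩
    exact ⟨hβ.unanimous, hβ.strategyProof, hβ.groupAnon⟩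

/-- An RSCF is unanimous, strategy-proof and group-wise
anonymous iff it is a probabilistic fixed group ballot rule. -/
theorem unanimous_strategyProof_groupAnon_iff_PFGBR {m n g : ℕ} (hn : 2 ≤ n)
    (grp : Fin n → Fin g) (hsurj : Function.Surjective grp)
    (φ : RSCF m n) (hφ : IsRSCF φ) :
    (Unanimous φ ∧ StrategyProof φ ∧ GroupAnon grp φ) ↔ IsPFGBR grp φ :=
  unanimous_strategyProof_groupAnon_iff_PFGBR_general grp φ hφ
end

section
/- Let φ be a probabilistic fixed ballot rule with probabilistic ballots {β_S}_{S⊆N}, and suppose φ is group-wise anonymous. Then for any S, S' ⊆ N such that |S ∩ N_q| = |S' ∩ N_q| for every group q ∈ G, we have β_S = β_{S'}. -/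
open Finset

/-!
In the profile where the members of `S` have peak `a_1` and everybody else has peak `a_m`,
every cut set `S(t; P)` is `S` itself, except where the ballot sums are pinned to `0` or `1`
anyway, so a PFBR outputs exactly the ballot `β_S` there. If `S` and `S'` meet every group in
equally many agents, a group-preserving permutation carries one such profile to the other, and
group-wise anonymity identifies the two outcomes.
-/

theorem Equiv.Perm.exists_comp_eq_of_card_fiber_eq {α γ : Type*} [Fintype α] [DecidableEq γ]
    (c c' : α → γ) (h : ∀ b, #{i | c i = b} = #{i | c' i = b}) :
    ∃ π : Equiv.Perm α, ∀ i, c' (π i) = c i :=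
  ⟨Equiv.ofFiberEquiv fun b => Fintype.equivOfCardEq (by simpa [Fintype.card_subtype] using h b),
    Equiv.ofFiberEquiv_map _⟩

lemma card_filter_and_mem_eq {α : Type*} [Fintype α] (p : α → Prop) [DecidablePred p]
    [DecidableEq α] (T : Finset α) : #{i | p i ∧ i ∈ T} = #(T.filter p) := by
  congr 1; ext; simp [and_comm]

lemma card_filter_and_mem_add_card_filter_and_not_mem {α : Type*} [Fintype α]
    (p : α → Prop) [DecidablePred p] [DecidableEq α] (T : Finset α) :
    #{i | p i ∧ i ∈ T} + #{i | p i ∧ i ∉ T} = #{i | p i} := by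
  rw [← filter_filter, ← filter_filter, card_filter_add_card_filter_not]

theorem exists_grp_preserving_perm_of_card_filter_eq {n g : ℕ} (grp : Fin n → Fin g) (S S' : Finset (Fin n))
    (h : ∀ q, (S.filter fun i => grp i = q).card = (S'.filter fun i => grp i = q).card) :
    ∃ π : Equiv.Perm (Fin n), (∀ i, grp (π i) = grp i) ∧ ∀ i, π i ∈ S' ↔ i ∈ S := by
  obtain ⟨π, hπ⟩ := Equiv.Perm.exists_comp_eq_of_card_fiber_eq
    (fun i => (grp i, decide (i ∈ S))) (fun i => (grp i, decide (i ∈ S'))) <| by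
      rintro ⟨q, _ | _⟩ <;>
        simp only [Prod.mk.injEq, decide_eq_false_iff_not, decide_eq_true_eq]
      · have hS := card_filter_and_mem_add_card_filter_and_not_mem (grp · = q) S
        have hS' := card_filter_and_mem_add_card_filter_and_not_mem (grp · = q) S'
        rw [card_filter_and_mem_eq] at hS hS'
        have := h q
        omega
      · rw [card_filter_and_mem_eq, card_filter_and_mem_eq, h]
  exact ⟨π, fun i => congrArg Prod.fst (hπ i), fun i => by simpa using congrArg Prod.snd (hπ i)⟩

def topPref (m : ℕ) : SPPref m :=
  ⟨Equiv.refl _, by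
    rintro a b (⟨-, hab⟩ | ⟨hba, hab⟩)
    · exact hab
    · exact absurd (hba.trans_le hab) (Fin.not_lt_zero b)⟩

def botPref (m : ℕ) : SPPref m :=
  ⟨Fin.revPerm, by
    rintro a b (⟨hla, hab⟩ | ⟨hba, -⟩)
    · simp only [Fin.revPerm_apply, Fin.rev_zero] at hla
      exact absurd (hla.trans_lt hab) (Fin.le_last b).not_gt
    · simpa using Fin.rev_lt_rev.mpr hba⟩

def profileOf {m n : ℕ} (S : Finset (Fin n)) : Profile m n :=
  fun i => if i ∈ S then topPref m else botPref m

section profileOf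

variable {m n : ℕ} (S : Finset (Fin n))

lemma peak_profileOf (i : Fin n) :
    peak (profileOf (m := m) S i) = if i ∈ S then 0 else Fin.last m := by
  by_cases hi : i ∈ S <;> simp [profileOf, hi, peak, topPref, botPref, Fin.rev_zero]

lemma filter_peak_profileOf_le {t : Fin (m + 1)} (ht : t ≠ Fin.last m) :
    univ.filter (fun i => peak (profileOf (m := m) S i) ≤ t) = S := by
  ext i
  by_cases hi : i ∈ S
  · simp [peak_profileOf, hi]
  · simpa [peak_profileOf, hi] using fun hle => ht (Fin.last_le_iff.mp hle)

lemma filter_peak_profileOf_lt {t : Fin (m + 1)} (ht : t ≠ 0) :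
    univ.filter (fun i => peak (profileOf (m := m) S i) < t) = S := by
  ext i
  by_cases hi : i ∈ S
  · simp [peak_profileOf, hi, Fin.pos_iff_ne_zero.mpr ht]
  · simp [peak_profileOf, hi, Fin.le_last]

theorem IsPFBRWith.apply_profileOf {φ : RSCF m n} {β : Finset (Fin n) → Fin (m + 1) → ℝ}
    (hβ : IsPFBRWith β φ) : φ (profileOf S) = β S := by
  obtain ⟨hprob, -, -, -, hφ⟩ := hβ
  have sum_univ (T : Finset (Fin n)) : ∑ b ∈ Iic (Fin.last m), β T b = 1 := by
    rw [← (hprob T).2]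
    congr 1
    ext; simp [Fin.le_last]
  funext t
  have hle : ∑ b ∈ Iic t, β (univ.filter fun i => peak (profileOf S i) ≤ t) b
      = ∑ b ∈ Iic t, β S b := by
    rcases eq_or_ne t (Fin.last m) with rfl | ht
    · rw [sum_univ, sum_univ]
    · rw [filter_peak_profileOf_le S ht]
  have hlt : ∑ b ∈ Iio t, β (univ.filter fun i => peak (profileOf S i) < t) b
      = ∑ b ∈ Iio t, β S b := by
    rcases eq_or_ne t 0 with rfl | ht
    · rw [show Iio (0 : Fin (m + 1)) = ∅ from Iio_eq_empty.mpr isMin_bot, sum_empty, sum_empty]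
    · rw [filter_peak_profileOf_lt S ht]
  rw [hφ, hle, hlt, ← Iio_insert, sum_insert (by simp), add_sub_cancel_right]

end profileOf

theorem PFBR_groupAnon_ballots_eq_general {m n g : ℕ}
    (grp : Fin n → Fin g)
    (φ : RSCF m n)
    (β : Finset (Fin n) → Fin (m + 1) → ℝ) (hβ : IsPFBRWith β φ)
    (hanon : GroupAnon grp φ) (S S' : Finset (Fin n))
    (h : ∀ q, (S.filter fun i => grp i = q).card = (S'.filter fun i => grp i = q).card) :
    β S = β S' := by
  obtain ⟨π, hgrp, hmem⟩ := exists_grp_preserving_perm_of_card_filter_eq grp S S' h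
  have hprof : (fun i => profileOf (m := m) S' (π i)) = profileOf S :=
    funext fun i => by simp only [profileOf, hmem]
  rw [← hβ.apply_profileOf S, ← hβ.apply_profileOf S', hanon π hgrp (profileOf S'), hprof]

/-- For a group-wise anonymous PFBR, ballots of sets with the
same number of members in each group coincide. -/
theorem PFBR_groupAnon_ballots_eq {m n g : ℕ} (hn : 2 ≤ n)
    (grp : Fin n → Fin g) (hsurj : Function.Surjective grp)
    (φ : RSCF m n) (hφ : IsRSCF φ)
    (β : Finset (Fin n) → Fin (m + 1) → ℝ) (hβ : IsPFBRWith β φ)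
    (hanon : GroupAnon grp φ) (S S' : Finset (Fin n))
    (h : ∀ q, (S.filter fun i => grp i = q).card = (S'.filter fun i => grp i = q).card) :
    β S = β S' :=
  PFBR_groupAnon_ballots_eq_general grp φ β hβ hanon S S' h
end

section
/- An RSCF φ : 𝒟^n → Δ(A) is unanimous, strategy-proof, and (κ_N,η_N)-weak fair if and only if it is a probabilistic fixed ballot rule with ballots {β_S}_{S⊆N} such that for all S_2 ⊆ S_1 ⊆ N with |S_1| ≥ 1, for all i ∈ S_1 \ S_2, and for all x ∈ [1, m−κ_i+1], it holds that β_{S_1}([a_1, a_{x+κ_i−1}]) − β_{S_2}([a_1, a_{x−1}]) ≥ η_i (the subtracted term being 0 when x = 1). -/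
open Finset

/-!
Write `cdf p k` for the mass that `p` puts on the first `k` alternatives and `lowPeaks P k` for
the agents whose peak is one of them. Both directions go through the cumulative form of a
probabilistic fixed ballot rule: the defining formula of `IsPFBRWith β φ` says exactly that
`cdf (φ P) k = cdf (β (lowPeaks P k)) k` for all `P` and `k`.

Forward direction. An agent can move his peak by one step by promoting the adjacent alternative
to the top of his preference; the upper contour sets below it do not change, so by
strategy-proofness (applied both ways) neither do the probabilities of the alternatives he ranks
below it. Moving peaks towards the threshold `k` therefore keeps `cdf (φ P) k`, and reduces every
profile to one whose peaks lie in `{k - 1, k}`. There unanimity puts all the mass on these two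
alternatives, so the probability of `k - 1` survives any change of preferences that keeps the
peaks. Hence `cdf (φ P) k` depends only on `lowPeaks P k`, and the ballot of `S` is the outcome of
the profile where `S` reports the peak `0` and everybody else the peak `m`. Weak fairness at the
profile where `S₂` reports `0`, `S₁ \ S₂` reports `x` and the others `m` gives the ballot
inequalities.

Backward direction. An upper contour set of a single-peaked preference is an interval around the
peak, so its probability is a difference of two ballot cdfs; a misreport can only shrink the
first coalition and enlarge the second. The top `κ i` alternatives form such an interval, of
length `κ i`, and its probability is bounded by the ballot inequality.
-/

open Finset Function

variable {m n : ℕ}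

lemma exists_forall_and_eq_of_update {ι β α : Type*} [Fintype ι] [DecidableEq ι]
    {G : ι → β → Prop} (f : (ι → β) → α) (P : ι → β)
    (h : ∀ Q i, (∀ j, Q j = P j ∨ G j (Q j)) → Q i = P i →
      ∃ b, G i b ∧ f (update Q i b) = f Q) :
    ∃ Q, (∀ i, G i (Q i)) ∧ f Q = f P := by
  suffices ∀ F : Finset ι, ∃ Q, (∀ i ∈ F, G i (Q i)) ∧ (∀ i ∉ F, Q i = P i) ∧ f Q = f P by
    obtain ⟨Q, hG, -, hf⟩ := this univ
    exact ⟨Q, fun i => hG i (mem_univ i), hf⟩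
  intro F
  induction F using Finset.induction_on with
  | empty => exact ⟨P, by simp, fun _ _ => rfl, rfl⟩
  | @insert a F ha ih =>
    obtain ⟨Q, hG, hP, hf⟩ := ih
    obtain ⟨b, hb, hfb⟩ :=
      h Q a (fun j => by by_cases hj : j ∈ F <;> simp [hj, hG, hP]) (hP a ha)
    refine ⟨update Q a b, fun i hi => ?_, fun i hi => ?_, hfb.trans hf⟩
    · rcases eq_or_ne i a with rfl | hia
      · simpa using hb
      · simpa [hia] using hG i ((mem_insert.mp hi).resolve_left hia)
    · rw [mem_insert, not_or] at hi
      simpa [hi.1] using hP i hi.2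

lemma Fin.val_cycleRange (i j : Fin (m + 1)) :
    (Fin.cycleRange i j : ℕ) = if j < i then (j : ℕ) + 1 else if j = i then 0 else (j : ℕ) := by
  split_ifs with h₁ h₂
  · exact Fin.coe_cycleRange_of_lt h₁
  · rw [Fin.coe_cycleRange_of_le h₂.le, if_pos h₂]
  · rw [Fin.cycleRange_of_gt (lt_of_le_of_ne (not_lt.mp h₁) (Ne.symm h₂))]

/-! ### Cumulative probabilities -/

/-- With alternatives indexed from `0`, `cdf p k` is `p([a₁, a_k])` and `lowPeaks P k` is
`S(k; P)`. -/
def cdf (p : Fin (m + 1) → ℝ) (k : ℕ) : ℝ :=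
  ∑ b ∈ univ.filter fun b : Fin (m + 1) => (b : ℕ) < k, p b

def lowPeaks (P : Profile m n) (k : ℕ) : Finset (Fin n) :=
  univ.filter fun i => (peak (P i) : ℕ) < k

section cdf

variable (p : Fin (m + 1) → ℝ)

@[simp]
lemma cdf_zero : cdf p 0 = 0 := by
  simp [cdf]

lemma cdf_of_le {k : ℕ} (hk : m + 1 ≤ k) : cdf p k = ∑ b, p b := by
  rw [cdf, filter_true_of_mem fun b _ => b.isLt.trans_le hk]

lemma cdf_succ {k : ℕ} (hk : k < m + 1) : cdf p (k + 1) = cdf p k + p ⟨k, hk⟩ := by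
  have : (univ.filter fun b : Fin (m + 1) => (b : ℕ) < k + 1) =
      insert ⟨k, hk⟩ (univ.filter fun b : Fin (m + 1) => (b : ℕ) < k) := by
    ext b; simp [Fin.ext_iff]; omega
  rw [cdf, this, sum_insert (by simp), cdf, add_comm]

lemma sum_Iic_eq_cdf (t : Fin (m + 1)) : ∑ b ∈ Iic t, p b = cdf p (t + 1) := by
  rw [cdf]; congr 1; ext b
  simp only [mem_Iic, mem_filter, mem_univ, true_and, Fin.le_def]; omega

lemma sum_Iio_eq_cdf (t : Fin (m + 1)) : ∑ b ∈ Iio t, p b = cdf p t := by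
  rw [cdf]; congr 1; ext b
  simp only [mem_Iio, mem_filter, mem_univ, true_and, Fin.lt_def]

lemma cdf_sub_cdf {j k : ℕ} (hjk : j ≤ k) :
    cdf p k - cdf p j = ∑ b ∈ univ.filter fun b : Fin (m + 1) => j ≤ b ∧ (b : ℕ) < k, p b := by
  rw [sub_eq_iff_eq_add', cdf, cdf,
    ← sum_filter_add_sum_filter_not _ fun b : Fin (m + 1) => (b : ℕ) < j,
    filter_filter, filter_filter]
  congr 2 <;> ext b <;> simp <;> omega

lemma sum_Icc_eq_cdf_sub_cdf {x y : Fin (m + 1)} (hxy : x ≤ y) :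
    ∑ b ∈ Icc x y, p b = cdf p (y + 1) - cdf p x := by
  rw [cdf_sub_cdf p (by rw [Fin.le_def] at hxy; omega)]
  congr 1; ext b
  simp only [mem_Icc, mem_filter, mem_univ, true_and, Fin.le_def]; omega

variable {p}

lemma cdf_congr {q : Fin (m + 1) → ℝ} {k : ℕ} (h : ∀ c : Fin (m + 1), (c : ℕ) < k → p c = q c) :
    cdf p k = cdf q k :=
  sum_congr rfl fun c hc => h c (mem_filter.mp hc).2

lemma cdf_le_cdf_of_forall_sum_Iic_le {q : Fin (m + 1) → ℝ}
    (h : ∀ t, ∑ b ∈ Iic t, p b ≤ ∑ b ∈ Iic t, q b) (k : ℕ) : cdf p k ≤ cdf q k := by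
  rcases k with _ | k
  · simp
  by_cases hk : k ≤ m
  · simpa only [sum_Iic_eq_cdf] using h ⟨k, by omega⟩
  · simpa only [sum_Iic_eq_cdf, Fin.val_last, cdf_of_le _ le_rfl,
      cdf_of_le _ (by omega : m + 1 ≤ k + 1)] using h (Fin.last m)

lemma IsProb.cdf_of_apply_eq_one (hp : IsProb p) {c : Fin (m + 1)} (hc : p c = 1) (k : ℕ) :
    cdf p k = if (c : ℕ) < k then 1 else 0 := by
  have hzero : ∀ b ≠ c, p b = 0 := by
    intro b hb
    have hsum := add_sum_erase univ p (mem_univ c)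
    rw [hp.2, hc, add_eq_left] at hsum
    exact (sum_eq_zero_iff_of_nonneg fun a _ => hp.1 a).mp hsum b (by simp [hb])
  rw [cdf]
  split_ifs with hck
  · rw [sum_eq_single_of_mem c (by simpa using hck) fun b _ hb => hzero b hb, hc]
  · exact sum_eq_zero fun b hb => hzero b (by rintro rfl; simp_all)

end cdf

lemma lowPeaks_succ (P : Profile m n) (t : Fin (m + 1)) :
    lowPeaks P (t + 1) = univ.filter fun i => peak (P i) ≤ t := by
  ext; simp only [lowPeaks, mem_filter, mem_univ, true_and, Fin.le_def, Nat.lt_succ_iff]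

lemma lowPeaks_val (P : Profile m n) (t : Fin (m + 1)) :
    lowPeaks P t = univ.filter fun i => peak (P i) < t := by
  ext; simp only [lowPeaks, mem_filter, mem_univ, true_and, Fin.lt_def]

lemma lowPeaks_update_subset (P : Profile m n) {i : Fin n} (W : SPPref m) {k : ℕ}
    (h : (peak (P i) : ℕ) < k) : lowPeaks (update P i W) k ⊆ lowPeaks P k := by
  intro j hj
  rcases eq_or_ne j i with rfl | hji
  · simpa [lowPeaks] using h
  · simpa [lowPeaks, hji] using hj

lemma lowPeaks_subset_update (P : Profile m n) {i : Fin n} (W : SPPref m) {k : ℕ}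
    (h : k ≤ (peak (P i) : ℕ)) : lowPeaks P k ⊆ lowPeaks (update P i W) k := by
  intro j hj
  rcases eq_or_ne j i with rfl | hji
  · simp [lowPeaks] at hj; omega
  · simpa [lowPeaks, hji] using hj

lemma pfbrFormula_iff_cdf_eq (β : Finset (Fin n) → Fin (m + 1) → ℝ) (φ : RSCF m n) :
    (∀ (P : Profile m n) (t : Fin (m + 1)),
      φ P t = (∑ b ∈ Iic t, β (univ.filter fun i => peak (P i) ≤ t) b)
        - ∑ b ∈ Iio t, β (univ.filter fun i => peak (P i) < t) b) ↔
      ∀ P k, cdf (φ P) k = cdf (β (lowPeaks P k)) k := by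
  simp only [sum_Iic_eq_cdf, sum_Iio_eq_cdf, ← lowPeaks_succ, ← lowPeaks_val]
  refine ⟨fun h P k => ?_, fun h P t => ?_⟩
  · induction k with
    | zero => simp
    | succ k ih =>
      by_cases hk : k < m + 1
      · rw [cdf_succ _ hk, ih, h P ⟨k, hk⟩]
        ring
      · have hcdf : ∀ p : Fin (m + 1) → ℝ, cdf p (k + 1) = cdf p k := fun p => by
          rw [cdf_of_le p (by omega), cdf_of_le p (by omega)]
        have hlow : lowPeaks P (k + 1) = lowPeaks P k := by
          ext i; simp only [lowPeaks, mem_filter, mem_univ, true_and]; omega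
        rw [hcdf, hcdf, hlow, ih]
  · rw [← h, ← h, cdf_succ _ t.isLt]
    ring

/-! ### Single-peaked preferences -/

section Preferences

lemma exists_UC_eq_topSet (V : SPPref m) {k : ℕ} (hk : 0 < k) : ∃ a, UC V a = topSet V k :=
  ⟨V.val ⟨min (k - 1) m, by omega⟩, by
    ext b
    simp only [UC, topSet, mem_filter, mem_univ, true_and, Equiv.symm_apply_apply, Fin.le_def]
    omega⟩

lemma card_topSet (V : SPPref m) {k : ℕ} (hk : k ≤ m + 1) : #(topSet V k) = k := by
  have : topSet V k = (univ.filter fun j : Fin (m + 1) => (j : ℕ) < k).map V.val.toEmbedding := by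
    ext b
    simp only [topSet, mem_filter, mem_univ, true_and, mem_map_equiv]
  rw [this, card_map, Fin.card_filter_val_lt, min_eq_right hk]

lemma topSet_one (V : SPPref m) : topSet V 1 = {peak V} := by
  ext b
  simp only [topSet, peak, mem_filter, mem_univ, true_and, mem_singleton, Nat.lt_one_iff,
    Fin.val_eq_zero_iff, Equiv.symm_apply_eq]

lemma topSet_symm_succ (V : SPPref m) (c : Fin (m + 1)) :
    topSet V (V.val.symm c + 1) = insert c (topSet V (V.val.symm c)) := by
  ext b
  have : b = c ↔ (V.val.symm b : ℕ) = V.val.symm c := by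
    rw [Fin.val_inj, V.val.symm.injective.eq_iff]
  simp only [topSet, mem_filter, mem_univ, true_and, mem_insert, this]
  omega

lemma UC_eq_Icc_s11 (V : SPPref m) (a : Fin (m + 1)) :
    ∃ x y, x ≤ peak V ∧ peak V ≤ y ∧ UC V a = Icc x y := by
  have hne : (UC V a).Nonempty := ⟨a, by simp [UC]⟩
  have hpeak : peak V ∈ UC V a := by simp [UC, peak]
  refine ⟨(UC V a).min' hne, (UC V a).max' hne, min'_le _ _ hpeak, le_max' _ _ hpeak, ?_⟩
  ext c
  refine ⟨fun hc => mem_Icc.mpr ⟨min'_le _ _ hc, le_max' _ _ hc⟩, fun hc => ?_⟩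
  obtain ⟨hxc, hcy⟩ := mem_Icc.mp hc
  have hmem : ∀ d ∈ UC V a, V.val.symm c ≤ V.val.symm d → c ∈ UC V a := fun d hd hcd => by
    simp only [UC, mem_filter, mem_univ, true_and] at hd ⊢
    exact hcd.trans hd
  rcases le_or_gt c (peak V) with hcp | hcp
  · rcases hxc.eq_or_lt with rfl | hxc
    · exact min'_mem _ _
    · exact hmem _ (min'_mem _ _) (V.property c _ (Or.inr ⟨hxc, hcp⟩)).le
  · rcases hcy.eq_or_lt with rfl | hcy
    · exact max'_mem _ _
    · exact hmem _ (max'_mem _ _) (V.property c _ (Or.inl ⟨hcp.le, hcy⟩)).le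

/-- The ranking `x ≻ x + 1 ≻ ⋯ ≻ m ≻ x - 1 ≻ ⋯ ≻ 0`. -/
def canonPerm (x : Fin (m + 1)) : Equiv.Perm (Fin (m + 1)) where
  toFun j := ⟨if (j : ℕ) + x ≤ m then (x : ℕ) + j else m - j, by split_ifs <;> omega⟩
  invFun b := ⟨if (x : ℕ) ≤ b then (b : ℕ) - x else m - b, by split_ifs <;> omega⟩
  left_inv j := by ext; dsimp only; split_ifs <;> omega
  right_inv b := by ext; dsimp only; split_ifs <;> omega

lemma canonPerm_zero (x : Fin (m + 1)) : canonPerm x 0 = x := by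
  ext; simp [canonPerm]; omega

lemma val_canonPerm_symm (x b : Fin (m + 1)) :
    ((canonPerm x).symm b : ℕ) = if (x : ℕ) ≤ b then (b : ℕ) - x else m - b := rfl

def canonPref (x : Fin (m + 1)) : SPPref m :=
  ⟨canonPerm x, fun a b h => by
    rw [canonPerm_zero] at h
    rw [Fin.lt_def, val_canonPerm_symm, val_canonPerm_symm]
    rcases h with ⟨h₁, h₂⟩ | ⟨h₁, h₂⟩ <;> rw [Fin.le_def] at * <;> rw [Fin.lt_def] at * <;>
      split_ifs <;> omega⟩

@[simp]
lemma peak_canonPref (x : Fin (m + 1)) : peak (canonPref x) = x :=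
  canonPerm_zero x

lemma topSet_canonPref_zero (k : ℕ) :
    topSet (canonPref (0 : Fin (m + 1))) k = univ.filter fun b : Fin (m + 1) => (b : ℕ) < k := by
  ext b
  simp [topSet, canonPref, val_canonPerm_symm]

lemma topSet_canonPref (x : Fin (m + 1)) {k : ℕ} (hk : x + k ≤ m + 1) :
    topSet (canonPref x) k =
      univ.filter fun b : Fin (m + 1) => (x : ℕ) ≤ b ∧ (b : ℕ) < x + k := by
  ext b
  simp only [topSet, mem_filter, mem_univ, true_and]
  rw [show ((canonPref x).val.symm b : ℕ) = _ from val_canonPerm_symm x b]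
  split_ifs <;> omega

/-- `V` with `x` moved to the top, the other alternatives keeping their relative order. -/
def promotePerm (V : SPPref m) (x : Fin (m + 1)) : Equiv.Perm (Fin (m + 1)) :=
  (Fin.cycleRange (V.val.symm x)).symm.trans V.val

lemma promotePerm_zero (V : SPPref m) (x : Fin (m + 1)) : promotePerm V x 0 = x := by
  simp [promotePerm, Fin.cycleRange_symm_zero]

lemma val_promotePerm_symm (V : SPPref m) (x b : Fin (m + 1)) :
    ((promotePerm V x).symm b : ℕ) =
      if V.val.symm b < V.val.symm x then (V.val.symm b : ℕ) + 1
      else if b = x then 0 else (V.val.symm b : ℕ) := by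
  simp [promotePerm, Fin.val_cycleRange, V.val.symm.injective.eq_iff]

def promote (V : SPPref m) (x : Fin (m + 1))
    (hx : (peak V : ℕ) ≤ x + 1 ∧ (x : ℕ) ≤ peak V + 1) : SPPref m :=
  ⟨promotePerm V x, fun a b h => by
    rw [promotePerm_zero] at h
    have hV : a = x ∨ (a ≠ x ∧ V.val.symm a < V.val.symm b) := by
      rcases h with ⟨hxa, hab⟩ | ⟨hba, hax⟩
      · rcases hxa.eq_or_lt with rfl | hxa
        · exact Or.inl rfl
        · refine Or.inr ⟨hxa.ne', V.property a b (Or.inl ⟨show peak V ≤ a from ?_, hab⟩)⟩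
          rw [Fin.le_def]; rw [Fin.lt_def] at hxa; omega
      · rcases hax.eq_or_lt with rfl | hax
        · exact Or.inl rfl
        · refine Or.inr ⟨hax.ne, V.property a b (Or.inr ⟨hba, show a ≤ peak V from ?_⟩)⟩
          rw [Fin.le_def]; rw [Fin.lt_def] at hax; omega
    have hb : b ≠ x := by
      rcases h with ⟨h₁, h₂⟩ | ⟨h₁, h₂⟩ <;> rintro rfl <;> order
    have hbx : (V.val.symm b : ℕ) ≠ V.val.symm x := by
      rw [Ne, Fin.val_inj, V.val.symm.injective.eq_iff]; exact hb
    rw [Fin.lt_def, val_promotePerm_symm, val_promotePerm_symm, if_neg hb]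
    rcases hV with rfl | ⟨ha, hab⟩
    · simp only [lt_self_iff_false, if_false, if_true]
      split_ifs <;> omega
    · have hax : (V.val.symm a : ℕ) ≠ V.val.symm x := by
        rw [Ne, Fin.val_inj, V.val.symm.injective.eq_iff]; exact ha
      rw [if_neg ha]
      rw [Fin.lt_def] at hab
      split_ifs <;> rw [Fin.lt_def] at * <;> omega⟩

lemma peak_promote (V : SPPref m) (x : Fin (m + 1)) (hx) : peak (promote V x hx) = x :=
  promotePerm_zero V x

lemma topSet_promote (V : SPPref m) {x : Fin (m + 1)} (hx) {k : ℕ}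
    (hk : (V.val.symm x : ℕ) < k) : topSet (promote V x hx) k = topSet V k := by
  ext b
  simp only [topSet, mem_filter, mem_univ, true_and]
  rw [show ((promote V x hx).val.symm b : ℕ) = _ from val_promotePerm_symm V x b]
  have : b = x ↔ (V.val.symm b : ℕ) = V.val.symm x := by
    rw [Fin.val_inj, V.val.symm.injective.eq_iff]
  split_ifs with h₁ h₂ <;> rw [Fin.lt_def] at * <;> omega

end Preferences

/-! ### Moving one peak under strategy-proofness -/

section StrategyProof

variable {φ : RSCF m n}

lemma StrategyProof.probOn_topSet_update_le (hs : StrategyProof φ) (P : Profile m n) (i : Fin n)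
    (W : SPPref m) (k : ℕ) :
    probOn φ (update P i W) (topSet (P i) k) ≤ probOn φ P (topSet (P i) k) := by
  rcases Nat.eq_zero_or_pos k with rfl | hk
  · simp [probOn, topSet]
  · obtain ⟨a, ha⟩ := exists_UC_eq_topSet (P i) hk
    rw [← ha]
    exact hs i P W a

lemma StrategyProof.probOn_topSet_update_eq (hs : StrategyProof φ) (P : Profile m n) (i : Fin n)
    {W : SPPref m} {k : ℕ} (h : topSet W k = topSet (P i) k) :
    probOn φ (update P i W) (topSet (P i) k) = probOn φ P (topSet (P i) k) := by
  refine le_antisymm (hs.probOn_topSet_update_le P i W k) ?_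
  simpa [h] using hs.probOn_topSet_update_le (update P i W) i (P i) k

lemma StrategyProof.apply_update_peak (hs : StrategyProof φ) (P : Profile m n) (i : Fin n)
    {W : SPPref m} (h : peak W = peak (P i)) :
    φ (update P i W) (peak (P i)) = φ P (peak (P i)) := by
  simpa [probOn, topSet_one] using
    hs.probOn_topSet_update_eq P i (k := 1) (by rw [topSet_one, topSet_one, h])

lemma StrategyProof.apply_update_promote (hs : StrategyProof φ) (P : Profile m n) (i : Fin n)
    {x : Fin (m + 1)} (hx) {c : Fin (m + 1)} (hc : (P i).val.symm x < (P i).val.symm c) :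
    φ (update P i (promote (P i) x hx)) c = φ P c := by
  have hsplit : ∀ Q : Profile m n, probOn φ Q (topSet (P i) ((P i).val.symm c + 1)) =
      φ Q c + probOn φ Q (topSet (P i) ((P i).val.symm c)) := fun Q => by
    rw [topSet_symm_succ, probOn, sum_insert (by simp [topSet])]; rfl
  have h₁ := hs.probOn_topSet_update_eq P i (topSet_promote (P i) hx
    (k := (P i).val.symm c + 1) (by rw [Fin.lt_def] at hc; omega))
  have h₀ := hs.probOn_topSet_update_eq P i (topSet_promote (P i) hx (k := (P i).val.symm c) hc)
  rw [hsplit, hsplit, h₀] at h₁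
  linarith

lemma StrategyProof.exists_cdf_update_eq_of_succ (hs : StrategyProof φ) (P : Profile m n)
    (i : Fin n) {x : Fin (m + 1)} (hx : (x : ℕ) = peak (P i) + 1) {k : ℕ} (hxk : (x : ℕ) < k) :
    ∃ W, peak W = x ∧ cdf (φ (update P i W)) k = cdf (φ P) k := by
  have hadj : (peak (P i) : ℕ) ≤ x + 1 ∧ (x : ℕ) ≤ peak (P i) + 1 := by omega
  refine ⟨promote (P i) x hadj, peak_promote _ _ _, ?_⟩
  set B := topSet (P i) ((P i).val.symm x + 1)
  -- what `P i` ranks weakly above `x ≥ peak (P i)` lies weakly left of `x`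
  have hB : B ⊆ univ.filter fun b : Fin (m + 1) => (b : ℕ) < k := by
    intro b hb
    simp only [B, topSet, mem_filter, mem_univ, true_and] at hb ⊢
    by_contra! hbk
    have := (P i).property x b (Or.inl ⟨show peak (P i) ≤ x by rw [Fin.le_def]; omega,
      by rw [Fin.lt_def]; omega⟩)
    rw [Fin.lt_def] at this
    omega
  rw [cdf, cdf, ← sum_sdiff hB, ← sum_sdiff hB]
  congr 1
  · refine sum_congr rfl fun c hc => hs.apply_update_promote P i hadj ?_
    simp only [B, topSet, mem_sdiff, mem_filter, mem_univ, true_and, not_lt] at hc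
    rw [Fin.lt_def]; omega
  · exact hs.probOn_topSet_update_eq P i (topSet_promote _ hadj (Nat.lt_succ_self _))

lemma StrategyProof.exists_apply_update_eq_of_pred (hs : StrategyProof φ) (P : Profile m n)
    (i : Fin n) {x : Fin (m + 1)} (hx : (x : ℕ) + 1 = peak (P i)) :
    ∃ W, peak W = x ∧ ∀ c < x, φ (update P i W) c = φ P c := by
  have hadj : (peak (P i) : ℕ) ≤ x + 1 ∧ (x : ℕ) ≤ peak (P i) + 1 := by omega
  exact ⟨promote (P i) x hadj, peak_promote _ _ _, fun c hc => hs.apply_update_promote P i hadj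
    ((P i).property x c (Or.inr ⟨hc, show x ≤ peak (P i) by rw [Fin.le_def]; omega⟩))⟩

lemma StrategyProof.exists_cdf_update_eq_of_le (hs : StrategyProof φ) (P : Profile m n)
    (i : Fin n) {t : Fin (m + 1)} (ht : peak (P i) ≤ t) {k : ℕ} (htk : (t : ℕ) < k) :
    ∃ W, peak W = t ∧ cdf (φ (update P i W)) k = cdf (φ P) k := by
  obtain ⟨d, hd⟩ : ∃ d, (t : ℕ) = peak (P i) + d :=
    ⟨t - peak (P i), by rw [Fin.le_def] at ht; omega⟩
  induction d generalizing t with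
  | zero => exact ⟨P i, Fin.ext hd.symm, by rw [update_eq_self]⟩
  | succ d ih =>
    obtain ⟨W₁, hW₁, hcdf₁⟩ := ih (t := ⟨t - 1, by omega⟩) (by rw [Fin.le_def]; dsimp; omega)
      (by dsimp; omega) (by dsimp; omega)
    obtain ⟨W, hW, hcdf⟩ := hs.exists_cdf_update_eq_of_succ (update P i W₁) i (x := t)
      (by rw [update_self, hW₁]; dsimp; omega) htk
    exact ⟨W, hW, by rw [← hcdf₁, ← hcdf, update_idem]⟩

lemma StrategyProof.exists_apply_update_eq_of_le (hs : StrategyProof φ) (P : Profile m n)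
    (i : Fin n) {s : Fin (m + 1)} (h : s ≤ peak (P i)) :
    ∃ W, peak W = s ∧ ∀ c < s, φ (update P i W) c = φ P c := by
  obtain ⟨d, hd⟩ : ∃ d, (peak (P i) : ℕ) = s + d :=
    ⟨peak (P i) - s, by rw [Fin.le_def] at h; omega⟩
  induction d generalizing s with
  | zero => exact ⟨P i, Fin.ext (by omega), fun c _ => by rw [update_eq_self]⟩
  | succ d ih =>
    obtain ⟨W₁, hW₁, hφ₁⟩ := ih (s := ⟨s + 1, by omega⟩) (by rw [Fin.le_def]; dsimp; omega)
      (by dsimp; omega)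
    obtain ⟨W, hW, hφW⟩ := hs.exists_apply_update_eq_of_pred (update P i W₁) i (x := s)
      (by rw [update_self, hW₁])
    refine ⟨W, hW, fun c hc => ?_⟩
    rw [← hφ₁ c (hc.trans (by rw [Fin.lt_def]; dsimp; omega)), ← hφW c hc, update_idem]

lemma StrategyProof.exists_twoPeaked_cdf_eq (hs : StrategyProof φ) (P : Profile m n)
    (t : Fin m) :
    ∃ Q : Profile m n,
      (∀ i, peak (Q i) = if (peak (P i) : ℕ) ≤ t then t.castSucc else t.succ) ∧
      cdf (φ Q) (t + 1) = cdf (φ P) (t + 1) :=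
  exists_forall_and_eq_of_update
    (G := fun i W => peak W = if (peak (P i) : ℕ) ≤ t then t.castSucc else t.succ)
    (fun Q => cdf (φ Q) (t + 1)) P fun Q i _ hQi => by
    split_ifs with h
    · exact hs.exists_cdf_update_eq_of_le Q i (by rw [hQi, Fin.le_def]; exact h) (by simp)
    · obtain ⟨W, hW, hφW⟩ := hs.exists_apply_update_eq_of_le Q i (s := t.succ)
        (by rw [hQi, Fin.le_def]; simp only [Fin.val_succ]; omega)
      exact ⟨W, hW, cdf_congr fun c hc => hφW c (by rw [Fin.lt_def]; simpa using hc)⟩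

end StrategyProof

/-! ### Unanimity and the two-peak reduction -/

section Unanimous

variable {φ : RSCF m n}

lemma cdf_eq_one_of_forall_peak_le (hφ : IsRSCF φ) (hu : Unanimous φ) (hs : StrategyProof φ)
    {P : Profile m n} {t : Fin (m + 1)} (h : ∀ i, peak (P i) ≤ t) : cdf (φ P) (t + 1) = 1 := by
  obtain ⟨Q, hQ, hcdf⟩ := exists_forall_and_eq_of_update (G := fun _ W => peak W = t)
    (fun Q => cdf (φ Q) (t + 1)) P fun Q i _ hQi =>
      hs.exists_cdf_update_eq_of_le Q i (by rw [hQi]; exact h i) (Nat.lt_succ_self _)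
  rw [← hcdf, (hφ Q).cdf_of_apply_eq_one (hu Q t hQ), if_pos (Nat.lt_succ_self _)]

lemma cdf_eq_zero_of_forall_le_peak (hφ : IsRSCF φ) (hu : Unanimous φ) (hs : StrategyProof φ)
    {P : Profile m n} {s : Fin (m + 1)} (h : ∀ i, s ≤ peak (P i)) : cdf (φ P) s = 0 := by
  obtain ⟨Q, hQ, hcdf⟩ := exists_forall_and_eq_of_update (G := fun _ W => peak W = s)
    (fun Q => cdf (φ Q) s) P fun Q i _ hQi => by
      obtain ⟨W, hW, hφW⟩ := hs.exists_apply_update_eq_of_le Q i (s := s) (by rw [hQi]; exact h i)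
      exact ⟨W, hW, cdf_congr fun c hc => hφW c hc⟩
  rw [← hcdf, (hφ Q).cdf_of_apply_eq_one (hu Q s hQ), if_neg (lt_irrefl _)]

variable {t : Fin m}

lemma cdf_succ_eq_apply_of_twoPeaked (hφ : IsRSCF φ) (hu : Unanimous φ) (hs : StrategyProof φ)
    {P : Profile m n} (h : ∀ i, peak (P i) = t.castSucc ∨ peak (P i) = t.succ) :
    cdf (φ P) (t + 1) = φ P t.castSucc := by
  have hzero : cdf (φ P) t.castSucc = 0 := cdf_eq_zero_of_forall_le_peak hφ hu hs fun i => by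
    rcases h i with h | h <;> rw [h]; exact Fin.castSucc_le_succ t
  have hsucc : cdf (φ P) (t + 1) = cdf (φ P) t.castSucc + φ P t.castSucc := cdf_succ _ (by omega)
  rw [hsucc, hzero, zero_add]

lemma apply_castSucc_add_apply_succ (hφ : IsRSCF φ) (hu : Unanimous φ) (hs : StrategyProof φ)
    {P : Profile m n} (h : ∀ i, peak (P i) = t.castSucc ∨ peak (P i) = t.succ) :
    φ P t.castSucc + φ P t.succ = 1 := by
  have hone : cdf (φ P) (t.succ + 1) = 1 := cdf_eq_one_of_forall_peak_le hφ hu hs fun i => by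
    rcases h i with h | h <;> rw [h]; exact Fin.castSucc_le_succ t
  rw [Fin.val_succ, cdf_succ _ (by omega), cdf_succ_eq_apply_of_twoPeaked hφ hu hs h] at hone
  exact hone

/-- Changing one preference but not its peak keeps the probability of that peak, and the
probabilities of `t` and `t + 1` add up to `1`. -/
lemma apply_castSucc_eq_of_peak_eq (hφ : IsRSCF φ) (hu : Unanimous φ) (hs : StrategyProof φ)
    {P Q : Profile m n} (hP : ∀ i, peak (P i) = t.castSucc ∨ peak (P i) = t.succ)
    (hPQ : ∀ i, peak (P i) = peak (Q i)) : φ P t.castSucc = φ Q t.castSucc := by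
  obtain ⟨R, hRQ, hR⟩ := exists_forall_and_eq_of_update (G := fun i W => W = Q i)
    (fun R => φ R t.castSucc) P fun R i hR hRi => by
      have hpeak : ∀ j, peak (R j) = peak (P j) := fun j => by
        rcases hR j with h | h <;> rw [h, hPQ]
      have hR₂ : ∀ j, peak (R j) = t.castSucc ∨ peak (R j) = t.succ := fun j => hpeak j ▸ hP j
      have hRQ₂ : ∀ j, peak (update R i (Q i) j) = t.castSucc ∨
          peak (update R i (Q i) j) = t.succ := fun j => by
        rcases eq_or_ne j i with rfl | hj
        · rw [update_self, ← hPQ]; exact hP j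
        · rw [update_of_ne hj]; exact hR₂ j
      have hsame := hs.apply_update_peak R i (W := Q i) (by rw [hpeak, hPQ])
      refine ⟨Q i, rfl, ?_⟩
      rcases hR₂ i with h | h <;> rw [h] at hsame
      · exact hsame
      · linarith [apply_castSucc_add_apply_succ hφ hu hs hR₂,
          apply_castSucc_add_apply_succ hφ hu hs hRQ₂]
  rw [← hR, show R = Q from funext hRQ]

lemma cdf_eq_of_lowPeaks_eq (hφ : IsRSCF φ) (hu : Unanimous φ) (hs : StrategyProof φ)
    {P Q : Profile m n} {k : ℕ} (h : lowPeaks P k = lowPeaks Q k) :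
    cdf (φ P) k = cdf (φ Q) k := by
  rcases Nat.eq_zero_or_pos k with rfl | hk0
  · simp
  by_cases hkm : m + 1 ≤ k
  · rw [cdf_of_le _ hkm, cdf_of_le _ hkm, (hφ P).2, (hφ Q).2]
  obtain ⟨t, rfl⟩ : ∃ t : Fin m, k = t + 1 := ⟨⟨k - 1, by omega⟩, by simp; omega⟩
  obtain ⟨P', hP', hcdfP⟩ := hs.exists_twoPeaked_cdf_eq P t
  obtain ⟨Q', hQ', hcdfQ⟩ := hs.exists_twoPeaked_cdf_eq Q t
  have htwo : ∀ i, peak (P' i) = t.castSucc ∨ peak (P' i) = t.succ := fun i => by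
    rw [hP']; split_ifs <;> simp
  have hlow : ∀ i, (peak (P i) : ℕ) ≤ t ↔ (peak (Q i) : ℕ) ≤ t := fun i => by
    simpa [lowPeaks, Nat.lt_succ_iff] using congrArg (i ∈ ·) h
  have hpeak : ∀ i, peak (P' i) = peak (Q' i) := fun i => by
    rw [hP', hQ', if_congr (hlow i) rfl rfl]
  rw [← hcdfP, ← hcdfQ, cdf_succ_eq_apply_of_twoPeaked hφ hu hs htwo,
    cdf_succ_eq_apply_of_twoPeaked hφ hu hs (fun i => hpeak i ▸ htwo i),
    apply_castSucc_eq_of_peak_eq hφ hu hs htwo hpeak]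

end Unanimous

/-! ### The ballots of a strategy-proof rule -/

def ballotProfile (m : ℕ) {n : ℕ} (S : Finset (Fin n)) : Profile m n :=
  fun i => if i ∈ S then canonPref 0 else canonPref (Fin.last m)

def ballot (φ : RSCF m n) (S : Finset (Fin n)) : Fin (m + 1) → ℝ :=
  φ (ballotProfile m S)

def FairBallots (κ : Fin n → ℕ) (η : Fin n → ℝ) (β : Finset (Fin n) → Fin (m + 1) → ℝ) :
    Prop :=
  ∀ S₁ S₂ : Finset (Fin n), S₂ ⊆ S₁ → 1 ≤ S₁.card →
    ∀ i ∈ S₁ \ S₂, ∀ x xe : Fin (m + 1), (xe : ℕ) + 1 = (x : ℕ) + κ i →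
      η i ≤ (∑ b ∈ Iic xe, β S₁ b) - ∑ b ∈ Iio x, β S₂ b

lemma val_peak_ballotProfile (S : Finset (Fin n)) (i : Fin n) :
    (peak (ballotProfile m S i) : ℕ) = if i ∈ S then 0 else m := by
  unfold ballotProfile; split_ifs <;> simp

section Ballots

variable {φ : RSCF m n}

lemma cdf_eq_cdf_ballot (hφ : IsRSCF φ) (hu : Unanimous φ) (hs : StrategyProof φ)
    (P : Profile m n) (k : ℕ) : cdf (φ P) k = cdf (ballot φ (lowPeaks P k)) k := by
  refine cdf_eq_of_lowPeaks_eq hφ hu hs ?_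
  ext i
  simp only [lowPeaks, mem_filter, mem_univ, true_and, val_peak_ballotProfile]
  split_ifs with h <;> omega

lemma StrategyProof.cdf_ballot_le_insert (hs : StrategyProof φ) (S : Finset (Fin n)) (a : Fin n)
    (k : ℕ) : cdf (ballot φ S) k ≤ cdf (ballot φ (insert a S)) k := by
  by_cases ha : a ∈ S
  · rw [insert_eq_of_mem ha]
  have hupdate :
      update (ballotProfile m (insert a S)) a (canonPref (Fin.last m)) = ballotProfile m S := by
    funext j
    rcases eq_or_ne j a with rfl | hja
    · simp [ballotProfile, ha]
    · simp [ballotProfile, hja]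
  have := hs.probOn_topSet_update_le (ballotProfile m (insert a S)) a (canonPref (Fin.last m)) k
  rwa [hupdate, show ballotProfile m (insert a S) a = canonPref 0 by simp [ballotProfile],
    topSet_canonPref_zero] at this

lemma StrategyProof.cdf_ballot_mono (hs : StrategyProof φ) {S T : Finset (Fin n)} (h : S ⊆ T)
    (k : ℕ) : cdf (ballot φ S) k ≤ cdf (ballot φ T) k := by
  rw [← union_sdiff_of_subset h]
  induction T \ S using Finset.induction_on with
  | empty => rw [union_empty]
  | insert a D _ ih => rw [union_insert]; exact ih.trans (hs.cdf_ballot_le_insert _ a k)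

theorem isPFBRWith_ballot (hφ : IsRSCF φ) (hu : Unanimous φ) (hs : StrategyProof φ) :
    IsPFBRWith (ballot φ) φ :=
  ⟨fun _ => hφ _, hu _ _ fun i => Fin.ext (by simp [val_peak_ballotProfile]),
    hu _ _ fun i => Fin.ext (by simp [val_peak_ballotProfile]),
    fun _ _ h t => by simpa only [sum_Iic_eq_cdf] using hs.cdf_ballot_mono h (t + 1),
    (pfbrFormula_iff_cdf_eq _ _).mpr (cdf_eq_cdf_ballot hφ hu hs)⟩

variable {κ : Fin n → ℕ} {η : Fin n → ℝ}

/-- Weak fairness at the profile where `S₂` reports `0`, `S₁ \ S₂` reports `x` and the others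
`m`: agent `i`'s top `κ i` alternatives are `[x, x + κ i)`. -/
lemma le_cdf_ballot_sub_cdf_ballot (hφ : IsRSCF φ) (hu : Unanimous φ) (hs : StrategyProof φ)
    (hκ : ∀ i, 1 ≤ κ i) (hwf : IndWeakFair κ η φ) {S₁ S₂ : Finset (Fin n)} (hS : S₂ ⊆ S₁)
    {i : Fin n} (hi : i ∈ S₁ \ S₂) {x : Fin (m + 1)} (hx : x + κ i ≤ m + 1) :
    η i ≤ cdf (ballot φ S₁) (x + κ i) - cdf (ballot φ S₂) x := by
  obtain ⟨hi₁, hi₂⟩ := mem_sdiff.mp hi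
  let P : Profile m n := fun j =>
    if j ∈ S₂ then canonPref 0 else if j ∈ S₁ then canonPref x else canonPref (Fin.last m)
  have hpeak : ∀ j, (peak (P j) : ℕ) = if j ∈ S₂ then 0 else if j ∈ S₁ then (x : ℕ) else m := by
    intro j; simp only [P]; split_ifs <;> simp
  have hlow₁ : lowPeaks P (x + κ i) = lowPeaks (ballotProfile m S₁) (x + κ i) := by
    ext j
    have := hκ i
    have := @hS j
    simp only [lowPeaks, mem_filter, mem_univ, true_and, hpeak, val_peak_ballotProfile]
    split_ifs <;> first | omega | tauto
  have hlow₂ : lowPeaks P x = lowPeaks (ballotProfile m S₂) x := by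
    ext j
    simp only [lowPeaks, mem_filter, mem_univ, true_and, hpeak, val_peak_ballotProfile]
    split_ifs <;> omega
  calc η i ≤ probOn φ P (topSet (P i) (κ i)) := hwf P i
    _ = cdf (φ P) (x + κ i) - cdf (φ P) x := by
      rw [show P i = canonPref x by simp [P, hi₁, hi₂], topSet_canonPref x hx, probOn,
        cdf_sub_cdf _ (by omega)]
    _ = _ := by
      rw [cdf_eq_of_lowPeaks_eq hφ hu hs hlow₁, cdf_eq_of_lowPeaks_eq hφ hu hs hlow₂]
      rfl

lemma fairBallots_ballot (hφ : IsRSCF φ) (hu : Unanimous φ) (hs : StrategyProof φ)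
    (hκ : ∀ i, 1 ≤ κ i) (hwf : IndWeakFair κ η φ) : FairBallots κ η (ballot φ) := by
  intro S₁ S₂ hS _ i hi x xe hxe
  rw [sum_Iic_eq_cdf, sum_Iio_eq_cdf, hxe]
  exact le_cdf_ballot_sub_cdf_ballot hφ hu hs hκ hwf hS hi (by omega)

end Ballots

/-! ### Probabilistic fixed ballot rules -/

namespace IsPFBRWith

variable {β : Finset (Fin n) → Fin (m + 1) → ℝ} {φ : RSCF m n}

lemma cdf_eq (hβ : IsPFBRWith β φ) (P : Profile m n) (k : ℕ) :
    cdf (φ P) k = cdf (β (lowPeaks P k)) k :=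
  (pfbrFormula_iff_cdf_eq β φ).mp hβ.2.2.2.2 P k

lemma cdf_mono (hβ : IsPFBRWith β φ) {S T : Finset (Fin n)} (h : S ⊆ T) (k : ℕ) :
    cdf (β S) k ≤ cdf (β T) k :=
  cdf_le_cdf_of_forall_sum_Iic_le (hβ.2.2.2.1 S T h) k

lemma probOn_Icc (hβ : IsPFBRWith β φ) (P : Profile m n) {x y : Fin (m + 1)} (hxy : x ≤ y) :
    probOn φ P (Icc x y) = cdf (β (lowPeaks P (y + 1))) (y + 1) - cdf (β (lowPeaks P x)) x := by
  rw [probOn, sum_Icc_eq_cdf_sub_cdf _ hxy, hβ.cdf_eq, hβ.cdf_eq]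

theorem unanimous (hβ : IsPFBRWith β φ) : Unanimous φ := by
  intro P a h
  have hlow : ∀ k, lowPeaks P k = if (a : ℕ) < k then univ else ∅ := fun k => by
    ext i; simp only [lowPeaks, h]; split_ifs <;> simp [*]
  have hpoint : φ P a = cdf (φ P) (a + 1) - cdf (φ P) a := by
    rw [cdf_succ _ a.isLt]; ring
  rw [hpoint, hβ.cdf_eq, hβ.cdf_eq, hlow, hlow, if_pos (Nat.lt_succ_self _), if_neg (lt_irrefl _),
    (hβ.1 univ).cdf_of_apply_eq_one hβ.2.2.1, (hβ.1 ∅).cdf_of_apply_eq_one hβ.2.1,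
    if_pos (by simp), if_neg (by rw [Fin.val_last]; exact not_lt.mpr a.is_le)]
  ring

theorem strategyProof (hβ : IsPFBRWith β φ) : StrategyProof φ := by
  intro i P W a
  obtain ⟨x, y, hx, hy, hUC⟩ := UC_eq_Icc_s11 (P i) a
  rw [hUC, hβ.probOn_Icc _ (hx.trans hy), hβ.probOn_Icc _ (hx.trans hy)]
  rw [Fin.le_def] at hx hy
  have h₁ := hβ.cdf_mono (lowPeaks_update_subset P (i := i) W (k := y + 1) (by omega)) (y + 1)
  have h₂ := hβ.cdf_mono (lowPeaks_subset_update P (i := i) W (k := x) hx) x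
  linarith

theorem indWeakFair {κ : Fin n → ℕ} {η : Fin n → ℝ} (hκ : ∀ i, 1 ≤ κ i ∧ κ i ≤ m + 1)
    (hβ : IsPFBRWith β φ) (hfair : FairBallots κ η β) : IndWeakFair κ η φ := by
  intro P i
  obtain ⟨a, ha⟩ := exists_UC_eq_topSet (P i) (hκ i).1
  obtain ⟨x, y, hx, hy, hUC⟩ := UC_eq_Icc_s11 (P i) a
  rw [← ha, hUC, hβ.probOn_Icc P (hx.trans hy)]
  have hcard : (y : ℕ) + 1 = x + κ i := by
    have := card_topSet (P i) (hκ i).2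
    rw [← ha, hUC, Fin.card_Icc] at this
    omega
  rw [Fin.le_def] at hx hy
  have hsub : lowPeaks P x ⊆ lowPeaks P (y + 1) := fun j hj => by
    simp only [lowPeaks, mem_filter, mem_univ, true_and] at hj ⊢; omega
  have hi : i ∈ lowPeaks P (y + 1) \ lowPeaks P x := by
    simp only [lowPeaks, mem_sdiff, mem_filter, mem_univ, true_and]; omega
  have := hfair _ _ hsub (card_pos.mpr ⟨i, (mem_sdiff.mp hi).1⟩) i hi x y hcard
  rwa [sum_Iic_eq_cdf, sum_Iio_eq_cdf] at this

end IsPFBRWith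

theorem indWeakFair_iff_PFBR_cond_general {m n : ℕ}
    (κ : Fin n → ℕ) (hκ : ∀ i, 1 ≤ κ i ∧ κ i ≤ m + 1)
    (η : Fin n → ℝ)
    (φ : RSCF m n) (hφ : IsRSCF φ) :
    (Unanimous φ ∧ StrategyProof φ ∧ IndWeakFair κ η φ) ↔
      ∃ β, IsPFBRWith β φ ∧
        ∀ S₁ S₂ : Finset (Fin n), S₂ ⊆ S₁ → 1 ≤ S₁.card →
          ∀ i ∈ S₁ \ S₂, ∀ x xe : Fin (m + 1), (xe : ℕ) + 1 = (x : ℕ) + κ i →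
            η i ≤ (∑ b ∈ Iic xe, β S₁ b) - ∑ b ∈ Iio x, β S₂ b := by
  constructor
  · rintro ⟨hu, hs, hwf⟩
    exact ⟨ballot φ, isPFBRWith_ballot hφ hu hs,
      fairBallots_ballot hφ hu hs (fun i => (hκ i).1) hwf⟩
  · rintro ⟨β, hβ, hfair⟩
    exact ⟨hβ.unanimous, hβ.strategyProof, hβ.indWeakFair hκ hfair⟩

/-- Direct characterization of unanimous, strategy-proof and
individually weakly fair RSCFs. -/
theorem indWeakFair_iff_PFBR_cond {m n : ℕ} (hn : 2 ≤ n)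
    (κ : Fin n → ℕ) (hκ : ∀ i, 1 ≤ κ i ∧ κ i ≤ m + 1)
    (η : Fin n → ℝ) (hη : ∀ i, 0 ≤ η i ∧ η i ≤ 1)
    (φ : RSCF m n) (hφ : IsRSCF φ) :
    (Unanimous φ ∧ StrategyProof φ ∧ IndWeakFair κ η φ) ↔
      ∃ β, IsPFBRWith β φ ∧
        ∀ S₁ S₂ : Finset (Fin n), S₂ ⊆ S₁ → 1 ≤ S₁.card →
          ∀ i ∈ S₁ \ S₂, ∀ x xe : Fin (m + 1), (xe : ℕ) + 1 = (x : ℕ) + κ i →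
            η i ≤ (∑ b ∈ Iic xe, β S₁ b) - ∑ b ∈ Iio x, β S₂ b :=
  indWeakFair_iff_PFBR_cond_general κ hκ η φ hφ
end

section
/- Let φ be a median rule with parameters a_1 = β_0 ⪯ β_1 ⪯ … ⪯ β_{n−1} ⪯ β_n = a_m, let P_N ∈ 𝒟^n be a single-peaked profile, let i be an agent, and let r = |{j ∈ N : P_j(1) ⪯ P_i(1)}|. If [β_{n−r}, β_{n−r+1}] ∩ U(P_i(κ_i),P_i) ≠ ∅, then φ(P_N) ∈ U(P_i(κ_i),P_i). -/
open Finset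

/-!
Let `c` be a common point of the parameter interval and of agent `i`'s top set, and let `p` be
`i`'s peak. Of the `2n+1` alternatives whose median is taken, the `r` peaks `≤ p` and the
`n-r+1` parameters `≤ c` give `n+1` alternatives `≤ p ⊔ c`; symmetrically the `n-r+1` peaks
`≥ p` and the `r` parameters `≥ c` give `n+1` alternatives `≥ p ⊓ c`. So the median lies between
`p` and `c`, and by single-peakedness the top set is an interval containing both.
-/

namespace List

variable {α : Type*} [LinearOrder α] {L : List α}

theorem Pairwise.getElem_le_of_lt_countP (hL : L.Pairwise (· ≤ ·)) {k : ℕ}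
    (hk : k < L.length) {u : α} (h : k < L.countP (· ≤ u)) : L[k] ≤ u := by
  by_contra! hu
  have htail : (L.drop k).countP (· ≤ u) = 0 := by
    have hsorted := hL.drop (i := k)
    rw [drop_eq_getElem_cons hk, pairwise_cons] at hsorted
    rw [drop_eq_getElem_cons hk, countP_eq_zero]
    rintro x hx
    rcases mem_cons.1 hx with rfl | hx
    · simpa using hu
    · simpa using hu.trans_le (hsorted.1 x hx)
  have hhead : (L.take k).countP (· ≤ u) ≤ k :=
    countP_le_length.trans (length_take_le _ _)
  have hsplit := countP_append (p := (· ≤ u)) (l₁ := L.take k) (l₂ := L.drop k)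
  rw [take_append_drop] at hsplit
  omega

theorem Pairwise.le_getElem_of_length_le_add_countP (hL : L.Pairwise (· ≤ ·)) {k : ℕ}
    (hk : k < L.length) {l : α} (h : L.length ≤ k + L.countP (l ≤ ·)) : l ≤ L[k] := by
  have hrev : (L.reverse.map OrderDual.toDual).Pairwise (· ≤ ·) :=
    pairwise_map.2 (pairwise_reverse.2 hL)
  have := hrev.getElem_le_of_lt_countP (k := L.length - 1 - k) (u := OrderDual.toDual l)
    (by simp only [length_map, length_reverse]; omega)
    (by simp only [countP_map, countP_reverse, Function.comp_def, OrderDual.toDual_le_toDual]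
        omega)
  simpa [getElem_reverse, show L.length - 1 - (L.length - 1 - k) = k by omega] using this

end List

section Counting

variable {α : Type*} [LinearOrder α]

theorem Monotone.add_one_le_card_filter_le {N : ℕ} {f : Fin N → α} (hf : Monotone f)
    {k : Fin N} {c : α} (h : f k ≤ c) : (k : ℕ) + 1 ≤ #{j | f j ≤ c} :=
  Fin.card_Iic k ▸ card_le_card fun _ hj => mem_filter.2 ⟨mem_univ _, (hf (mem_Iic.1 hj)).trans h⟩

theorem Monotone.sub_le_card_filter_ge {N : ℕ} {f : Fin N → α} (hf : Monotone f)
    {k : Fin N} {c : α} (h : c ≤ f k) : N - k ≤ #{j | c ≤ f j} :=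
  Fin.card_Ici k ▸ card_le_card fun _ hj => mem_filter.2 ⟨mem_univ _, h.trans (hf (mem_Ici.1 hj))⟩

theorem card_lt_card_filter_le_add_card_filter_ge {ι : Type*} [Fintype ι] (f : ι → α) (i : ι) :
    Fintype.card ι < #{j | f j ≤ f i} + #{j | f i ≤ f j} := by
  have hsplit := card_filter_add_card_filter_not (s := univ) (fun j => f j ≤ f i)
  have hgt : #{j | ¬f j ≤ f i} < #{j | f i ≤ f j} := by
    have hsub : ({j | ¬f j ≤ f i} : Finset ι) ⊆ ({j | f i ≤ f j} : Finset ι) :=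
      monotone_filter_right _ fun _ _ hj => (not_le.1 hj).le
    exact card_lt_card ((ssubset_iff_of_subset hsub).2 ⟨i, by simp⟩)
  rw [card_univ] at hsplit
  omega

end Counting

section SinglePeaked

variable {m : ℕ} (P : SPPref m) (k : ℕ)

theorem topSet_ordConnected : (topSet P k : Set (Fin (m + 1))).OrdConnected := by
  refine ⟨fun a ha b hb x ⟨hax, hxb⟩ => ?_⟩
  simp only [coe_filter, topSet, mem_univ, true_and] at ha hb ⊢
  rcases le_or_gt x (peak P) with hx | hx
  · rcases hax.eq_or_lt with rfl | hax
    · exact ha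
    · exact (Fin.lt_def.1 (P.prop x a (Or.inr ⟨hax, hx⟩))).trans ha
  · rcases hxb.eq_or_lt with rfl | hxb
    · exact hb
    · exact (Fin.lt_def.1 (P.prop x b (Or.inl ⟨hx.le, hxb⟩))).trans hb

variable {P k}

theorem peak_mem_topSet_of_mem {a : Fin (m + 1)} (ha : a ∈ topSet P k) :
    peak P ∈ topSet P k := by
  simp only [topSet, mem_filter, mem_univ, true_and, peak, Equiv.symm_apply_apply,
    Fin.val_zero] at ha ⊢
  omega

end SinglePeaked

section MedianRule

variable {m n : ℕ} (β : Fin (n + 1) → Fin (m + 1)) (P : Profile m n)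

def peaksAndParams : Multiset (Fin (m + 1)) :=
  (univ.val.map fun i : Fin n => peak (P i)) + (univ.val.map fun j : Fin (n + 1) => β j)

theorem medianOutcome_eq_getD :
    medianOutcome β P = ((peaksAndParams β P).sort (· ≤ ·)).getD n 0 := rfl

theorem length_sort_peaksAndParams :
    ((peaksAndParams β P).sort (· ≤ ·)).length = 2 * n + 1 := by
  simp only [Multiset.length_sort, peaksAndParams, Multiset.card_add, Multiset.card_map,
    card_val, card_univ, Fintype.card_fin]
  omega

theorem countP_sort_peaksAndParams (p : Fin (m + 1) → Prop) [DecidablePred p] :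
    ((peaksAndParams β P).sort (· ≤ ·)).countP p = #{i | p (peak (P i))} + #{j | p (β j)} := by
  rw [← Multiset.coe_countP, Multiset.sort_eq, peaksAndParams, Multiset.countP_add,
    Multiset.countP_map, Multiset.countP_map]
  rfl

variable {β P}

theorem medianOutcome_le_sup {a b : Fin (m + 1)}
    (h : n < #{i | peak (P i) ≤ a} + #{j | β j ≤ b}) : medianOutcome β P ≤ a ⊔ b := by
  have hlen := length_sort_peaksAndParams β P
  rw [medianOutcome_eq_getD, List.getD_eq_getElem _ _ (by omega)]
  refine (Multiset.pairwise_sort _ _).getElem_le_of_lt_countP _ ?_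
  rw [countP_sort_peaksAndParams]
  have hpeaks : #{i | peak (P i) ≤ a} ≤ #{i | peak (P i) ≤ a ⊔ b} :=
    card_le_card (monotone_filter_right _ fun _ _ => le_sup_of_le_left)
  have hparams : #{j | β j ≤ b} ≤ #{j | β j ≤ a ⊔ b} :=
    card_le_card (monotone_filter_right _ fun _ _ => le_sup_of_le_right)
  omega

theorem inf_le_medianOutcome {a b : Fin (m + 1)}
    (h : n < #{i | a ≤ peak (P i)} + #{j | b ≤ β j}) : a ⊓ b ≤ medianOutcome β P := by
  have hlen := length_sort_peaksAndParams β P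
  rw [medianOutcome_eq_getD, List.getD_eq_getElem _ _ (by omega)]
  refine (Multiset.pairwise_sort _ _).le_getElem_of_length_le_add_countP _ ?_
  rw [countP_sort_peaksAndParams]
  have hpeaks : #{i | a ≤ peak (P i)} ≤ #{i | a ⊓ b ≤ peak (P i)} :=
    card_le_card (monotone_filter_right _ fun _ _ => inf_le_of_left_le)
  have hparams : #{j | b ≤ β j} ≤ #{j | a ⊓ b ≤ β j} :=
    card_le_card (monotone_filter_right _ fun _ _ => inf_le_of_right_le)
  omega

end MedianRule

theorem median_mem_topSet_of_params_meet_general {m n : ℕ} (κ : Fin n → ℕ)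
    (β : Fin (n + 1) → Fin (m + 1)) (hβ : MedianParams β)
    (P : Profile m n) (i : Fin n)
    (r : ℕ) (hr : r = (univ.filter fun j => peak (P j) ≤ peak (P i)).card)
    (h1 : n - r < n + 1) (h2 : n - r + 1 < n + 1)
    (hmeet : ((Finset.Icc (β ⟨n - r, h1⟩) (β ⟨n - r + 1, h2⟩)) ∩
      topSet (P i) (κ i)).Nonempty) :
    medianOutcome β P ∈ topSet (P i) (κ i) := by
  obtain ⟨c, hc⟩ := hmeet
  obtain ⟨hc_params, hc_top⟩ := mem_inter.1 hc
  obtain ⟨hc_lo, hc_hi⟩ := mem_Icc.1 hc_params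
  have hrn : r ≤ n := hr ▸ (card_le_univ _).trans_eq (Fintype.card_fin n)
  have hpeaks : n < r + #{j | peak (P i) ≤ peak (P j)} := by
    rw [hr]
    simpa only [Fintype.card_fin] using
      card_lt_card_filter_le_add_card_filter_ge (fun j => peak (P j)) i
  have hbelow : n - r + 1 ≤ #{j | β j ≤ c} := hβ.2.2.add_one_le_card_filter_le hc_lo
  have habove : n + 1 - (n - r + 1) ≤ #{j | c ≤ β j} := hβ.2.2.sub_le_card_filter_ge hc_hi
  have hle : medianOutcome β P ≤ peak (P i) ⊔ c :=
    medianOutcome_le_sup (by rw [← hr]; omega)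
  have hge : peak (P i) ⊓ c ≤ medianOutcome β P := inf_le_medianOutcome (by omega)
  exact (topSet_ordConnected _ _).uIcc_subset (peak_mem_topSet_of_mem hc_top) hc_top ⟨hge, hle⟩

/-- Key lemma about median rules: if the interval between the
`(n-r)`-th and `(n-r+1)`-th parameters meets agent `i`'s top `κ i` alternatives,
then the median rule selects one of those alternatives. -/
theorem median_mem_topSet_of_params_meet {m n : ℕ} (hn : 2 ≤ n)
    (κ : Fin n → ℕ) (hκ : ∀ i, 1 ≤ κ i ∧ κ i ≤ m + 1)
    (β : Fin (n + 1) → Fin (m + 1)) (hβ : MedianParams β)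
    (P : Profile m n) (i : Fin n)
    (r : ℕ) (hr : r = (univ.filter fun j => peak (P j) ≤ peak (P i)).card)
    (h1 : n - r < n + 1) (h2 : n - r + 1 < n + 1)
    (hmeet : ((Finset.Icc (β ⟨n - r, h1⟩) (β ⟨n - r + 1, h2⟩)) ∩
      topSet (P i) (κ i)).Nonempty) :
    medianOutcome β P ∈ topSet (P i) (κ i) :=
  median_mem_topSet_of_params_meet_general κ β hβ P i r hr h1 h2 hmeet
end
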